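/- arXiv:1501.04904 — 7 statements merged into one kernel-verified Lean document; each statement's English description precedes it below -/
import Mathlib

section
/- Let q be a prime power, let r and k be positive integers with r dividing k, and let C ⊆ 𝔽_q^n be a linear code of dimension k that has all-symbol locality r. Then the minimum distance of C satisfies d(C) ≤ n - k - ⌈k/r⌉ + 2. -/
/-- `C` (a set of words indexed by `ι` over alphabet `F`) has all-symbol locality `r`:
every coordinate `i` has a recovering set `I` of at most `r` other coordinates such that
any two codewords agreeing on `I` agree at `i`. -/
def HasAllSymbolLocality {ι F : Type*} (C : Set (ι → F)) (r : ℕ) : Prop :=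
  ∀ i : ι, ∃ I : Finset ι, i ∉ I ∧ I.card ≤ r ∧
    ∀ c ∈ C, ∀ c' ∈ C, (∀ j ∈ I, c j = c' j) → c i = c' i

/-- `d` is the minimum Hamming distance between distinct codewords of `C`. -/
def IsMinDist {ι F : Type*} [Fintype ι] [DecidableEq F] (C : Set (ι → F)) (d : ℕ) : Prop :=
  (∃ c ∈ C, ∃ c' ∈ C, c ≠ c' ∧ hammingDist c c' = d) ∧
  (∀ c ∈ C, ∀ c' ∈ C, c ≠ c' → d ≤ hammingDist c c')

/-!
Write `C_A` for the subcode of words of `C` vanishing on a set `A` of coordinates. Each added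
coordinate cuts at most one dimension, so `|A| + dim C_A` never decreases as `A` grows. Adding a
coordinate `i` together with its recovering set costs at most `r` dimensions, while `i` itself is
free, as every codeword vanishing on the recovering set vanishes at `i`; so this raises
`|A| + dim C_A` by one. Doing so `⌈k/r⌉ - 1` times from `A = ∅` keeps `dim C_A ≥ 1`, and adding
single coordinates until `dim C_A = 1` then yields `|A| ≥ k + ⌈k/r⌉ - 2` with a nonzero codeword
vanishing on `A`, of weight at most `n - |A|`.
-/

open Module

section VanishingSubcode

variable {ι F : Type*} [DivisionRing F]

theorem Submodule.finrank_le_finrank_inf_ker_add {V W : Type*} [AddCommGroup V] [Module F V]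
    [AddCommGroup W] [Module F W] [FiniteDimensional F V] [FiniteDimensional F W]
    (p : Submodule F V) (f : V →ₗ[F] W) :
    finrank F p ≤ finrank F ↥(p ⊓ LinearMap.ker f) + finrank F W := by
  rw [← (f.domRestrict p).finrank_range_add_finrank_ker, LinearMap.ker_domRestrict,
    ← Submodule.map_comap_subtype, Submodule.finrank_map_subtype_eq, add_comm]
  gcongr
  exact Submodule.finrank_le _

def vanishingSubcode (C : Submodule F (ι → F)) (A : Finset ι) : Submodule F (ι → F) :=
  C ⊓ Submodule.pi (A : Set ι) fun _ => ⊥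

variable (C : Submodule F (ι → F))

@[simp]
theorem mem_vanishingSubcode {A : Finset ι} {v : ι → F} :
    v ∈ vanishingSubcode C A ↔ v ∈ C ∧ ∀ i ∈ A, v i = 0 := by
  simp [vanishingSubcode, Submodule.mem_pi]

theorem vanishingSubcode_empty : vanishingSubcode C ∅ = C := by
  ext v
  simp

theorem exists_notMem_of_one_le_finrank_vanishingSubcode {A : Finset ι}
    (hA : 1 ≤ finrank F (vanishingSubcode C A)) : ∃ i, i ∉ A := by
  by_contra! hA_univ
  have hbot : vanishingSubcode C A = ⊥ := (Submodule.eq_bot_iff _).2 fun v hv =>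
    funext fun i => ((mem_vanishingSubcode C).1 hv).2 i (hA_univ i)
  rw [hbot, finrank_bot] at hA
  exact Nat.not_succ_le_zero 0 hA

variable [DecidableEq ι]

theorem vanishingSubcode_insert_eq {i : ι} {I B : Finset ι}
    (hrec : ∀ c ∈ C, ∀ c' ∈ C, (∀ j ∈ I, c j = c' j) → c i = c' i) (hIB : I ⊆ B) :
    vanishingSubcode C (insert i B) = vanishingSubcode C B := by
  ext v
  simp only [mem_vanishingSubcode, Finset.forall_mem_insert]
  refine ⟨fun ⟨hv, _, hB⟩ => ⟨hv, hB⟩, fun ⟨hv, hB⟩ => ⟨hv, ?_, hB⟩⟩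
  exact hrec v hv 0 C.zero_mem fun j hj => hB j (hIB hj)

variable [Fintype ι]

theorem finrank_vanishingSubcode_le_finrank_union_add_card (A B : Finset ι) :
    finrank F (vanishingSubcode C A) ≤ finrank F (vanishingSubcode C (A ∪ B)) + B.card := by
  have hker : vanishingSubcode C (A ∪ B) =
      vanishingSubcode C A ⊓ LinearMap.ker (LinearMap.funLeft F F ((↑) : B → ι)) := by
    ext v
    simp [funext_iff, or_imp, forall_and, and_assoc]
  have hrank := Submodule.finrank_le_finrank_inf_ker_add (vanishingSubcode C A)
    (LinearMap.funLeft F F ((↑) : B → ι))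
  rwa [← hker, Module.finrank_fintype_fun_eq_card, Fintype.card_coe] at hrank

theorem card_add_finrank_vanishingSubcode_mono {A B : Finset ι} (hAB : A ⊆ B) :
    A.card + finrank F (vanishingSubcode C A) ≤ B.card + finrank F (vanishingSubcode C B) := by
  have hrank := finrank_vanishingSubcode_le_finrank_union_add_card C A (B \ A)
  rw [Finset.union_sdiff_of_subset hAB] at hrank
  have hcard := Finset.card_sdiff_add_card_eq_card hAB
  omega

theorem exists_superset_finrank_vanishingSubcode_eq_one {A : Finset ι}
    (hA : 1 ≤ finrank F (vanishingSubcode C A)) :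
    ∃ B, A ⊆ B ∧ finrank F (vanishingSubcode C B) = 1 := by
  obtain ⟨B, hB, hmax⟩ := (Finset.univ.filter fun B : Finset ι =>
    A ⊆ B ∧ 1 ≤ finrank F (vanishingSubcode C B)).exists_max_image Finset.card
      ⟨A, Finset.mem_filter.2 ⟨Finset.mem_univ A, subset_rfl, hA⟩⟩
  simp only [Finset.mem_filter, Finset.mem_univ, true_and] at hB hmax
  obtain ⟨i, hi⟩ := exists_notMem_of_one_le_finrank_vanishingSubcode C hB.2
  have hrank := finrank_vanishingSubcode_le_finrank_union_add_card C B {i}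
  have hzero : finrank F (vanishingSubcode C (B ∪ {i})) = 0 := by
    by_contra! hpos
    have hle := hmax (B ∪ {i})
      ⟨hB.1.trans Finset.subset_union_left, Nat.one_le_iff_ne_zero.2 hpos⟩
    simp [hi] at hle
  refine ⟨B, hB.1, ?_⟩
  simp only [Finset.card_singleton, hzero] at hrank
  omega

theorem HasAllSymbolLocality.exists_card_add_finrank_vanishingSubcode {r : ℕ}
    (hloc : HasAllSymbolLocality (C : Set (ι → F)) r) {j : ℕ} (hj : j * r < finrank F C) :
    ∃ A : Finset ι, finrank F C + j ≤ A.card + finrank F (vanishingSubcode C A) ∧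
      finrank F C ≤ finrank F (vanishingSubcode C A) + j * r := by
  induction j with
  | zero => refine ⟨∅, ?_, ?_⟩ <;> rw [vanishingSubcode_empty] <;> simp
  | succ j ih =>
    obtain ⟨A, hcard, hrank⟩ := ih ((Nat.mul_le_mul_right r j.le_succ).trans_lt hj)
    rw [Nat.succ_mul] at hj ⊢
    obtain ⟨i, hiA⟩ := exists_notMem_of_one_le_finrank_vanishingSubcode C (A := A) (by omega)
    obtain ⟨I, hiI, hIr, hrec⟩ := hloc i
    have hmono :=
      card_add_finrank_vanishingSubcode_mono C (Finset.subset_union_left : A ⊆ A ∪ I)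
    have hdrop := finrank_vanishingSubcode_le_finrank_union_add_card C A I
    refine ⟨insert i (A ∪ I), ?_, ?_⟩ <;>
      rw [vanishingSubcode_insert_eq C hrec Finset.subset_union_right]
    · rw [Finset.card_insert_of_notMem (by simp [hiA, hiI])]
      omega
    · omega

theorem exists_ne_zero_hammingNorm_add_card_le [DecidableEq F] {B : Finset ι}
    (hB : 1 ≤ finrank F (vanishingSubcode C B)) :
    ∃ c ∈ C, c ≠ 0 ∧ hammingNorm c + B.card ≤ Fintype.card ι := by
  obtain ⟨c, hc, hc0⟩ := Submodule.exists_mem_ne_zero_of_ne_bot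
    (Submodule.one_le_finrank_iff.1 hB)
  obtain ⟨hcC, hcB⟩ := (mem_vanishingSubcode C).1 hc
  refine ⟨c, hcC, hc0, ?_⟩
  have hsupp : (Finset.univ.filter fun i => c i ≠ 0) ⊆ Bᶜ := fun i hi =>
    Finset.mem_compl.2 fun hiB => (Finset.mem_filter.1 hi).2 (hcB i hiB)
  have hle := Finset.card_le_card hsupp
  rw [Finset.card_compl] at hle
  have := B.card_le_univ
  unfold hammingNorm
  omega

end VanishingSubcode

theorem lrc_singleton_bound_general
    (r k n d : ℕ) (hk : 0 < k)
    (F : Type*) [Field F] [DecidableEq F]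
    (C : Submodule F (Fin n → F)) (hdim : Module.finrank F C = k)
    (hloc : HasAllSymbolLocality (C : Set (Fin n → F)) r)
    (hd : IsMinDist (C : Set (Fin n → F)) d) :
    (d : ℤ) ≤ (n : ℤ) - (k : ℤ) - ((k / r : ℕ) : ℤ) + 2 := by
  have hj : (k / r - 1) * r < finrank F C := by
    rw [hdim]
    rcases Nat.eq_zero_or_pos r with rfl | hr
    · simpa using hk
    · have := Nat.div_mul_le_self k r
      rw [Nat.sub_one_mul]
      omega
  obtain ⟨A, hAcard, hArank⟩ := hloc.exists_card_add_finrank_vanishingSubcode C hj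
  obtain ⟨B, hAB, hB⟩ :=
    exists_superset_finrank_vanishingSubcode_eq_one C (A := A) (by omega)
  have hmono := card_add_finrank_vanishingSubcode_mono C hAB
  obtain ⟨c, hcC, hc0, hwt⟩ := exists_ne_zero_hammingNorm_add_card_le C hB.ge
  have hdc : d ≤ hammingNorm c := by simpa using hd.2 c hcC 0 C.zero_mem hc0
  rw [Fintype.card_fin] at hwt
  omega

/-- Singleton-type bound for LRC codes: if a linear code `C ⊆ 𝔽_q^n` of dimension `k`
has all-symbol locality `r` (with `r ∣ k`), then its minimum distance `d` satisfies
`d ≤ n - k - ⌈k/r⌉ + 2` (here `⌈k/r⌉ = k / r` since `r ∣ k`). -/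
theorem lrc_singleton_bound
    (q r k n d : ℕ) (hq : IsPrimePow q) (hr : 0 < r) (hk : 0 < k) (hrk : r ∣ k)
    (F : Type*) [Field F] [Fintype F] [DecidableEq F] (hF : Fintype.card F = q)
    (C : Submodule F (Fin n → F)) (hdim : Module.finrank F C = k)
    (hloc : HasAllSymbolLocality (C : Set (Fin n → F)) r)
    (hd : IsMinDist (C : Set (Fin n → F)) d) :
    (d : ℤ) ≤ (n : ℤ) - (k : ℤ) - ((k / r : ℕ) : ℤ) + 2 :=
  lrc_singleton_bound_general r k n d hk F C hdim hloc hd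
end

section
/- Let q be a prime power and let r, k, n be positive integers with r | k, (r+1) | n, n ≤ q and k/r ≤ n/(r+1). Let A ⊆ 𝔽_q with |A| = n be partitioned into blocks A_1, …, A_{n/(r+1)}, each of size r+1, and let g ∈ 𝔽_q[X] be a polynomial of degree r+1 that is constant on each block A_m. Let V ⊆ 𝔽_q[X] be the 𝔽_q-linear span of the polynomials g(X)^j X^i for 0 ≤ i ≤ r-1 and 0 ≤ j ≤ k/r - 1, and let C ⊆ 𝔽_q^A be the image of V under the evaluation map f ↦ (f(P))_{P ∈ A}. Then the minimum distance of C equals n - k - k/r + 2. -/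
/-! Write `t = k / r`. Each `g ^ j * X ^ i` with `i < r`, `j < t` has degree at most
`(t - 1) (r + 1) + (r - 1) = k + t - 2`, so a nonzero polynomial of `V` has at most `k + t - 2`
zeros in `A`, and every nonzero codeword has weight at least `n - k - t + 2`. For equality take
`h(g) * p`, where `h` vanishes at the values of `g` on `t - 1` blocks and `p` at `r - 1` points
of a further block: since `g` is constant on blocks, `h(g)` vanishes on those whole blocks, and
`deg h < t`, `deg p < r` keep the product in `V`. -/

open Polynomial

noncomputable section

/-- The evaluation map sending a polynomial `f ∈ F[X]` to the vector of its values
`(f(P))_{P ∈ A}`. -/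
def evalOn {F : Type*} [CommSemiring F] (A : Finset F) :
    Polynomial F →ₗ[F] (A → F) :=
  LinearMap.pi fun P => Polynomial.leval (P : F)

open Finset Function

theorem isMinDist_of_hammingNorm {ι F : Type*} [Fintype ι] [Ring F] [DecidableEq F]
    {C : Submodule F (ι → F)} {d : ℕ} (hle : ∀ c ∈ C, c ≠ 0 → d ≤ hammingNorm c)
    (hex : ∃ c ∈ C, c ≠ 0 ∧ hammingNorm c = d) : IsMinDist (C : Set (ι → F)) d := by
  obtain ⟨c, hc, hc0, hcd⟩ := hex
  refine ⟨⟨c, hc, 0, C.zero_mem, hc0, by rwa [hammingDist_zero_right]⟩, ?_⟩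
  intro c hc c' hc' hne
  rw [hammingDist_eq_hammingNorm, neg_add_eq_sub]
  exact hle _ (C.sub_mem hc' hc) (sub_ne_zero.mpr hne.symm)

section Evaluation

variable {F : Type*} [Field F] [DecidableEq F]

theorem hammingNorm_evalOn (A : Finset F) (f : F[X]) :
    hammingNorm (evalOn A f) = #{P ∈ A | ¬ f.IsRoot P} := by
  rw [hammingNorm, ← card_map (Embedding.subtype _)]
  congr 1
  ext P
  simp [evalOn, and_comm]

theorem card_sub_natDegree_le_hammingNorm_evalOn (A : Finset F) {f : F[X]} (hf : f ≠ 0) :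
    #A - f.natDegree ≤ hammingNorm (evalOn A f) := by
  have hroots : #{P ∈ A | f.IsRoot P} ≤ f.natDegree :=
    card_le_degree_of_subset_roots fun P hP => by
      rw [mem_val, mem_filter] at hP
      exact (mem_roots hf).mpr hP.2
  have := card_filter_add_card_filter_not (s := A) (fun P => f.IsRoot P)
  rw [hammingNorm_evalOn]
  omega

theorem hammingNorm_evalOn_le_card_sub (A : Finset F) (f : F[X]) {Z : Finset F} (hZA : Z ⊆ A)
    (hZ : ∀ P ∈ Z, f.IsRoot P) : hammingNorm (evalOn A f) ≤ #A - #Z := by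
  have hroots : #Z ≤ #{P ∈ A | f.IsRoot P} :=
    card_le_card fun P hP => mem_filter.mpr ⟨hZA hP, hZ P hP⟩
  have := card_filter_add_card_filter_not (s := A) (fun P => f.IsRoot P)
  rw [hammingNorm_evalOn]
  omega

theorem isMinDist_map_evalOn {A : Finset F} {V : Submodule F F[X]} {D : ℕ}
    (hV : ∀ f ∈ V, f.natDegree ≤ D) (hD : D < #A)
    (hex : ∃ f ∈ V, f ≠ 0 ∧ ∃ Z ⊆ A, #Z = D ∧ ∀ P ∈ Z, f.IsRoot P) :
    IsMinDist (V.map (evalOn A) : Set (A → F)) (#A - D) := by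
  have hweight : ∀ f ∈ V, f ≠ 0 → #A - D ≤ hammingNorm (evalOn A f) := fun f hf hf0 =>
    (Nat.sub_le_sub_left (hV f hf) _).trans (card_sub_natDegree_le_hammingNorm_evalOn A hf0)
  apply isMinDist_of_hammingNorm
  · rintro _ ⟨f, hf, rfl⟩ hne
    exact hweight f hf (by rintro rfl; exact hne (map_zero _))
  · obtain ⟨f, hf, hf0, Z, hZA, hZ, hroot⟩ := hex
    have hle := hZ ▸ hammingNorm_evalOn_le_card_sub A f hZA hroot
    have hge := hweight f hf hf0
    refine ⟨evalOn A f, ⟨f, hf, rfl⟩, hammingNorm_pos_iff.mp (by omega), by omega⟩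

end Evaluation

section Space

variable {R : Type*} [CommSemiring R]

def tamoBargSpace (g : R[X]) (r t : ℕ) : Submodule R R[X] :=
  Submodule.span R {p | ∃ i j : ℕ, i < r ∧ j < t ∧ p = g ^ j * X ^ i}

theorem natDegree_le_of_mem_tamoBargSpace {g f : R[X]} {r t : ℕ} (hf : f ∈ tamoBargSpace g r t) :
    f.natDegree ≤ (t - 1) * g.natDegree + (r - 1) := by
  refine natDegree_le_iff_degree_le.mpr (mem_degreeLE.mp ?_)
  refine Submodule.span_le.mpr ?_ hf
  rintro _ ⟨i, j, hi, hj, rfl⟩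
  refine mem_degreeLE.mpr (natDegree_le_iff_degree_le.mp ?_)
  have hpow : j * g.natDegree ≤ (t - 1) * g.natDegree := Nat.mul_le_mul_right _ (by omega)
  calc (g ^ j * X ^ i).natDegree ≤ (g ^ j).natDegree + (X ^ i : R[X]).natDegree :=
        natDegree_mul_le
    _ ≤ j * g.natDegree + i := add_le_add natDegree_pow_le (natDegree_X_pow_le i)
    _ ≤ (t - 1) * g.natDegree + (r - 1) := by omega

theorem aeval_mul_mem_tamoBargSpace (g : R[X]) {r t : ℕ} {h p : R[X]} (hh : h.natDegree < t)
    (hp : p.natDegree < r) : aeval g h * p ∈ tamoBargSpace g r t := by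
  rw [aeval_eq_sum_range' hh, p.as_sum_range' r hp, sum_mul_sum]
  refine Submodule.sum_mem _ fun j hj => Submodule.sum_mem _ fun i hi => ?_
  have heq : (h.coeff j • g ^ j) * monomial i (p.coeff i)
      = (h.coeff j * p.coeff i) • (g ^ j * X ^ i) := by
    rw [← C_mul_X_pow_eq_monomial, smul_eq_C_mul, smul_eq_C_mul, map_mul]
    ring
  rw [heq]
  exact Submodule.smul_mem _ _ (Submodule.subset_span
    ⟨i, j, mem_range.mp hi, mem_range.mp hj, rfl⟩)

end Space

theorem card_image_biUnion_le {ι α β : Type*} [DecidableEq α] [DecidableEq β] (s : Finset ι)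
    (t : ι → Finset α) (φ : α → β) (hφ : ∀ m ∈ s, ∀ a ∈ t m, ∀ b ∈ t m, φ a = φ b) :
    #((s.biUnion t).image φ) ≤ #s := by
  rw [biUnion_image]
  refine card_biUnion_le.trans (card_eq_sum_ones s ▸ sum_le_sum fun m hm => ?_)
  refine card_le_one.mpr fun x hx y hy => ?_
  obtain ⟨a, ha, rfl⟩ := mem_image.mp hx
  obtain ⟨b, hb, rfl⟩ := mem_image.mp hy
  exact hφ m hm a ha b hb

theorem pairwise_disjoint_of_existsUnique {ι α : Type*} {A : Finset α} {𝒜 : ι → Finset α}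
    (hsub : ∀ m, 𝒜 m ⊆ A) (hpart : ∀ P ∈ A, ∃! m, P ∈ 𝒜 m) : Pairwise (Disjoint on 𝒜) :=
  fun m _ hne => disjoint_left.mpr fun P hP hP' =>
    hne ((hpart P (hsub m hP)).unique hP hP')

section Witness

variable {F : Type*} [Field F] [DecidableEq F]

def tamoBargWitness (g : F[X]) (Z B : Finset F) : F[X] :=
  aeval g (Lagrange.nodal (Z.image (eval · g)) id) * Lagrange.nodal B id

theorem isRoot_tamoBargWitness (g : F[X]) {Z B : Finset F} {P : F} (hP : P ∈ Z ∪ B) :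
    (tamoBargWitness g Z B).IsRoot P := by
  rw [tamoBargWitness, IsRoot, eval_mul, ← comp_eq_aeval, eval_comp]
  rcases mem_union.mp hP with hP | hP
  · exact mul_eq_zero_of_left
      (Lagrange.eval_nodal_at_node (v := (id : F → F)) (mem_image_of_mem (eval · g) hP)) _
  · exact mul_eq_zero_of_right _ (Lagrange.eval_nodal_at_node (v := (id : F → F)) hP)

theorem tamoBargWitness_ne_zero {g : F[X]} (hg : 0 < g.natDegree) (Z B : Finset F) :
    tamoBargWitness g Z B ≠ 0 := by
  refine mul_ne_zero (fun h => ?_) Lagrange.nodal_ne_zero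
  rw [← comp_eq_aeval, Polynomial.comp_eq_zero_iff] at h
  rcases h with h | ⟨-, h⟩
  · exact Lagrange.nodal_ne_zero h
  · exact hg.ne' (h ▸ natDegree_C _)

theorem tamoBargWitness_mem_tamoBargSpace (g : F[X]) {Z B : Finset F} {r t : ℕ}
    (hZ : #(Z.image (eval · g)) < t) (hB : #B < r) :
    tamoBargWitness g Z B ∈ tamoBargSpace g r t :=
  aeval_mul_mem_tamoBargSpace g (by rwa [Lagrange.natDegree_nodal])
    (by rwa [Lagrange.natDegree_nodal])

end Witness

theorem exists_mem_tamoBargSpace_card_roots {F ι : Type*} [Field F] [DecidableEq F] [Fintype ι]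
    {r t : ℕ} (hr : 0 < r) (ht : 0 < t) (htι : t ≤ Fintype.card ι)
    {A : Finset F} {𝒜 : ι → Finset F} (hsub : ∀ m, 𝒜 m ⊆ A) (hpart : ∀ P ∈ A, ∃! m, P ∈ 𝒜 m)
    (hcard : ∀ m, #(𝒜 m) = r + 1) {g : F[X]} (hg : 0 < g.natDegree)
    (hconst : ∀ m, ∀ P ∈ 𝒜 m, ∀ Q ∈ 𝒜 m, g.eval P = g.eval Q) :
    ∃ f ∈ tamoBargSpace g r t, f ≠ 0 ∧
      ∃ Z ⊆ A, #Z = (t - 1) * (r + 1) + (r - 1) ∧ ∀ P ∈ Z, f.IsRoot P := by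
  classical
  have hdisj := pairwise_disjoint_of_existsUnique hsub hpart
  obtain ⟨T, -, hT⟩ := exists_subset_card_eq (s := (univ : Finset ι)) (by simpa using htι)
  obtain ⟨L, hL⟩ := card_pos.mp (hT ▸ ht)
  obtain ⟨B, hBL, hB⟩ := exists_subset_card_eq (s := 𝒜 L) (n := r - 1) (by rw [hcard]; omega)
  set S := T.erase L
  have hS : #S = t - 1 := by rw [card_erase_of_mem hL, hT]
  have hSB : Disjoint (S.biUnion 𝒜) B := (disjoint_biUnion_left _ _ _).mpr fun m hm =>
    (hdisj (ne_of_mem_erase hm)).mono_right hBL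
  refine ⟨tamoBargWitness g (S.biUnion 𝒜) B, tamoBargWitness_mem_tamoBargSpace g ?_ (by omega),
    tamoBargWitness_ne_zero hg _ _, S.biUnion 𝒜 ∪ B,
    union_subset (biUnion_subset.mpr fun m _ => hsub m) (hBL.trans (hsub L)), ?_,
    fun P hP => isRoot_tamoBargWitness g hP⟩
  · exact (card_image_biUnion_le S 𝒜 _ fun m _ => hconst m).trans_lt (by omega)
  · rw [card_union_of_disjoint hSB, card_biUnion (hdisj.set_pairwise _),
      sum_const_nat fun m _ => hcard m, hS, hB]

theorem tamo_barg_min_distance_general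
    (r k n : ℕ) (hr : 0 < r) (hk : 0 < k)
    (hrk : r ∣ k) (hkn : k / r ≤ n / (r + 1))
    (F : Type*) [Field F] [DecidableEq F]
    (A : Finset F) (hA : A.card = n)
    (𝒜 : Fin (n / (r + 1)) → Finset F)
    (hsub : ∀ m, 𝒜 m ⊆ A)
    (hpart : ∀ P ∈ A, ∃! m, P ∈ 𝒜 m)
    (hcard : ∀ m, (𝒜 m).card = r + 1)
    (g : Polynomial F) (hg : g.natDegree = r + 1)
    (hconst : ∀ m, ∀ P ∈ 𝒜 m, ∀ Q ∈ 𝒜 m, g.eval P = g.eval Q)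
    (V : Submodule F (Polynomial F))
    (hV : V = Submodule.span F
      {p : Polynomial F | ∃ i j : ℕ, i < r ∧ j < k / r ∧ p = g ^ j * Polynomial.X ^ i})
    (C : Submodule F (A → F)) (hC : C = Submodule.map (evalOn A) V) :
    IsMinDist (C : Set (A → F)) (n - k - k / r + 2) := by
  subst hC hV hA
  set t := k / r
  have ht : 0 < t := Nat.div_pos (Nat.le_of_dvd hk hrk) hr
  have htA : t * (r + 1) ≤ #A := (Nat.le_div_iff_mul_le (Nat.succ_pos r)).mp hkn
  have htk : t * (r + 1) = k + t := by rw [← Nat.mul_div_cancel' hrk]; ring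
  have hD : (t - 1) * (r + 1) + (r - 1) + 2 = k + t := by
    have : r + 1 ≤ t * (r + 1) := Nat.le_mul_of_pos_left _ ht
    rw [Nat.sub_one_mul]
    omega
  have hcode := isMinDist_map_evalOn (A := A) (V := tamoBargSpace g r t)
    (fun f hf => hg ▸ natDegree_le_of_mem_tamoBargSpace hf) (by omega)
    (exists_mem_tamoBargSpace_card_roots hr ht (by simpa using hkn) hsub hpart hcard
      (by omega) hconst)
  rwa [show #A - ((t - 1) * (r + 1) + (r - 1)) = #A - k - t + 2 by omega] at hcode

/-- The Tamo–Barg LRC code has minimum distance exactly `n - k - k/r + 2`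
(which equals `n - k - ⌈k/r⌉ + 2` since `r ∣ k`). -/
theorem tamo_barg_min_distance
    (q r k n : ℕ) (hq : IsPrimePow q) (hr : 0 < r) (hk : 0 < k) (hn : 0 < n)
    (hrk : r ∣ k) (hr1n : (r + 1) ∣ n) (hnq : n ≤ q) (hkn : k / r ≤ n / (r + 1))
    (F : Type*) [Field F] [Fintype F] [DecidableEq F] (hF : Fintype.card F = q)
    (A : Finset F) (hA : A.card = n)
    (𝒜 : Fin (n / (r + 1)) → Finset F)
    (hsub : ∀ m, 𝒜 m ⊆ A)
    (hpart : ∀ P ∈ A, ∃! m, P ∈ 𝒜 m)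
    (hcard : ∀ m, (𝒜 m).card = r + 1)
    (g : Polynomial F) (hg : g.natDegree = r + 1)
    (hconst : ∀ m, ∀ P ∈ 𝒜 m, ∀ Q ∈ 𝒜 m, g.eval P = g.eval Q)
    (V : Submodule F (Polynomial F))
    (hV : V = Submodule.span F
      {p : Polynomial F | ∃ i j : ℕ, i < r ∧ j < k / r ∧ p = g ^ j * Polynomial.X ^ i})
    (C : Submodule F (A → F)) (hC : C = Submodule.map (evalOn A) V) :
    IsMinDist (C : Set (A → F)) (n - k - k / r + 2) :=
  tamo_barg_min_distance_general r k n hr hk hrk hkn F A hA 𝒜 hsub hpart hcard g hg hconst V hV C hC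
end
end

section
/- Let q be a prime power and let r, k, n be positive integers with r | k, (r+1) | n, n ≤ q and k/r ≤ n/(r+1). Let A ⊆ 𝔽_q with |A| = n be partitioned into blocks A_1, …, A_{n/(r+1)}, each of size r+1, and let g ∈ 𝔽_q[X] be a polynomial of degree r+1 that is constant on each block A_m. Let V ⊆ 𝔽_q[X] be the 𝔽_q-linear span of the polynomials g(X)^j X^i for 0 ≤ i ≤ r-1 and 0 ≤ j ≤ k/r - 1, and let C ⊆ 𝔽_q^A be the image of V under the evaluation map f ↦ (f(P))_{P ∈ A}. Then for every f ∈ V and every block A_m there exists a univariate polynomial δ ∈ 𝔽_q[X] of degree at most r-1 with f(P) = δ(P) for all P ∈ A_m; consequently C has all-symbol locality r, where for each coordinate P ∈ A_m the recovering set is A_m \ {P}. -/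
/-!
Since `g` is constant on a block `A_m`, say equal to `c`, every generator `g ^ j * X ^ i` of `V`
agrees on `A_m` with `c ^ j X ^ i`, of degree `< r`. Agreeing on `A_m` with a polynomial of
degree `< r` is a linear condition, so all of `V` satisfies it. For `f, f' ∈ V` that agree on the
`r` points of `A_m \ {P}`, the polynomial of degree `< r` representing `f - f'` on `A_m` has `r`
roots, hence vanishes, and so `f` and `f'` also agree at `P`.
-/

open Polynomial

noncomputable section

theorem Polynomial.degree_le_pred_of_degree_lt {R : Type*} [Semiring R] {p : R[X]} {r : ℕ}
    (h : p.degree < r) : p.degree ≤ ((r - 1 : ℕ) : WithBot ℕ) := by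
  rw [degree_lt_iff_coeff_zero] at h
  rw [degree_le_iff_coeff_zero]
  intro m hm
  exact h m (by norm_cast at hm; omega)

section

variable {R : Type*} [CommSemiring R]

@[simp]
theorem evalOn_apply (s : Finset R) (f : R[X]) (x : s) : evalOn s f x = f.eval (x : R) := rfl

def degreeLTOn (s : Finset R) (r : ℕ) : Submodule R R[X] :=
  ((degreeLT R r).map (evalOn s)).comap (evalOn s)

theorem mem_degreeLTOn {s : Finset R} {r : ℕ} {f : R[X]} :
    f ∈ degreeLTOn s r ↔
      ∃ δ : R[X], δ.degree < r ∧ ∀ x ∈ s, f.eval x = δ.eval x := by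
  simp only [degreeLTOn, Submodule.mem_comap, Submodule.mem_map, mem_degreeLT, funext_iff,
    evalOn_apply, Subtype.forall]
  exact exists_congr fun δ => and_congr_right fun _ => forall₂_congr fun x _ => eq_comm

theorem pow_mul_X_pow_mem_degreeLTOn {s : Finset R} {r i : ℕ} {g : R[X]}
    (hg : ∀ x ∈ s, ∀ y ∈ s, g.eval x = g.eval y) (hi : i < r) (j : ℕ) :
    g ^ j * X ^ i ∈ degreeLTOn s r := by
  rw [mem_degreeLTOn]
  rcases s.eq_empty_or_nonempty with rfl | ⟨y, hy⟩
  · exact ⟨0, by simp, by simp⟩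
  · refine ⟨C (g.eval y ^ j) * X ^ i,
      (degree_C_mul_X_pow_le i _).trans_lt (by exact_mod_cast hi), fun x hx => ?_⟩
    simp [hg x hx y hy]

theorem span_pow_mul_X_pow_le_degreeLTOn {s : Finset R} {r t : ℕ} {g : R[X]}
    (hg : ∀ x ∈ s, ∀ y ∈ s, g.eval x = g.eval y) :
    Submodule.span R {p : R[X] | ∃ i j : ℕ, i < r ∧ j < t ∧ p = g ^ j * X ^ i} ≤
      degreeLTOn s r := by
  rw [Submodule.span_le]
  rintro _ ⟨i, j, hi, -, rfl⟩
  exact pow_mul_X_pow_mem_degreeLTOn hg hi j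

end

theorem eval_eq_zero_of_mem_degreeLTOn {R : Type*} [CommRing R] [IsDomain R] [DecidableEq R]
    {s : Finset R} {r : ℕ} {f : R[X]} (hf : f ∈ degreeLTOn s r) (hs : r < s.card)
    {x : R} (hx : x ∈ s)
    (hzero : ∀ y ∈ s.erase x, f.eval y = 0) : f.eval x = 0 := by
  obtain ⟨δ, hδ, hfδ⟩ := mem_degreeLTOn.mp hf
  have hδ_zero : δ = 0 := by
    refine eq_zero_of_degree_lt_of_eval_finset_eq_zero (s.erase x) (hδ.trans_le ?_) fun y hy => ?_
    · rw [Finset.card_erase_of_mem hx]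
      exact_mod_cast Nat.le_sub_one_of_lt hs
    · rw [← hfδ y (Finset.mem_of_mem_erase hy), hzero y hy]
  rw [hfδ x hx, hδ_zero, eval_zero]

theorem tamo_barg_locality_general
    (r k n : ℕ)
    (F : Type*) [Field F]
    (A : Finset F)
    (𝒜 : Fin (n / (r + 1)) → Finset F)
    (hsub : ∀ m, 𝒜 m ⊆ A)
    (hcard : ∀ m, (𝒜 m).card = r + 1)
    (g : Polynomial F)
    (hconst : ∀ m, ∀ P ∈ 𝒜 m, ∀ Q ∈ 𝒜 m, g.eval P = g.eval Q)
    (V : Submodule F (Polynomial F))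
    (hV : V = Submodule.span F
      {p : Polynomial F | ∃ i j : ℕ, i < r ∧ j < k / r ∧ p = g ^ j * Polynomial.X ^ i})
    (C : Submodule F (A → F)) (hC : C = Submodule.map (evalOn A) V) :
    (∀ f ∈ V, ∀ m, ∃ δ : Polynomial F, δ.degree ≤ ((r - 1 : ℕ) : WithBot ℕ) ∧
        ∀ P ∈ 𝒜 m, f.eval P = δ.eval P) ∧
    (∀ m, ∀ P : A, (P : F) ∈ 𝒜 m →
        ∀ c ∈ C, ∀ c' ∈ C,
          (∀ Q : A, (Q : F) ∈ 𝒜 m → Q ≠ P → c Q = c' Q) → c P = c' P) := by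
  classical
  have hV_le : ∀ m, V ≤ degreeLTOn (𝒜 m) r := fun m =>
    hV ▸ span_pow_mul_X_pow_le_degreeLTOn (hconst m)
  subst hC
  refine ⟨fun f hf m => ?_, ?_⟩
  · obtain ⟨δ, hδ, hfδ⟩ := mem_degreeLTOn.mp (hV_le m hf)
    exact ⟨δ, degree_le_pred_of_degree_lt hδ, hfδ⟩
  · rintro m P hP _ ⟨f, hf, rfl⟩ _ ⟨f', hf', rfl⟩ hagree
    rw [evalOn_apply, evalOn_apply, ← sub_eq_zero, ← eval_sub]
    refine eval_eq_zero_of_mem_degreeLTOn (hV_le m (V.sub_mem hf hf'))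
      (hcard m ▸ r.lt_succ_self) hP fun y hy => ?_
    have hy_mem := Finset.mem_of_mem_erase hy
    have := hagree ⟨y, hsub m hy_mem⟩ hy_mem (Subtype.coe_ne_coe.mp (Finset.ne_of_mem_erase hy))
    rwa [evalOn_apply, evalOn_apply, ← sub_eq_zero, ← eval_sub] at this

/-- On every block `A_m`, each function of the Tamo–Barg code space `V` agrees with a
univariate polynomial of degree at most `r - 1`; consequently the evaluation code `C` has
all-symbol locality `r`, the recovering set of a coordinate `P ∈ A_m` being `A_m \ {P}`. -/
theorem tamo_barg_locality
    (q r k n : ℕ) (hq : IsPrimePow q) (hr : 0 < r) (hk : 0 < k) (hn : 0 < n)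
    (hrk : r ∣ k) (hr1n : (r + 1) ∣ n) (hnq : n ≤ q) (hkn : k / r ≤ n / (r + 1))
    (F : Type*) [Field F] [Fintype F] [DecidableEq F] (hF : Fintype.card F = q)
    (A : Finset F) (hA : A.card = n)
    (𝒜 : Fin (n / (r + 1)) → Finset F)
    (hsub : ∀ m, 𝒜 m ⊆ A)
    (hpart : ∀ P ∈ A, ∃! m, P ∈ 𝒜 m)
    (hcard : ∀ m, (𝒜 m).card = r + 1)
    (g : Polynomial F) (hg : g.natDegree = r + 1)
    (hconst : ∀ m, ∀ P ∈ 𝒜 m, ∀ Q ∈ 𝒜 m, g.eval P = g.eval Q)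
    (V : Submodule F (Polynomial F))
    (hV : V = Submodule.span F
      {p : Polynomial F | ∃ i j : ℕ, i < r ∧ j < k / r ∧ p = g ^ j * Polynomial.X ^ i})
    (C : Submodule F (A → F)) (hC : C = Submodule.map (evalOn A) V) :
    (∀ f ∈ V, ∀ m, ∃ δ : Polynomial F, δ.degree ≤ ((r - 1 : ℕ) : WithBot ℕ) ∧
        ∀ P ∈ 𝒜 m, f.eval P = δ.eval P) ∧
    (∀ m, ∀ P : A, (P : F) ∈ 𝒜 m →
        ∀ c ∈ C, ∀ c' ∈ C,
          (∀ Q : A, (Q : F) ∈ 𝒜 m → Q ≠ P → c Q = c' Q) → c P = c' P) :=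
  tamo_barg_locality_general r k n F A 𝒜 hsub hcard g hconst V hV C hC
end
end

section
/- Let q0 be a prime power and q = q0². The number of affine 𝔽_q-rational points of the Hermitian curve, i.e., the number of pairs (a, b) ∈ 𝔽_q × 𝔽_q with a^{q0} + a = b^{q0+1}, equals q0³. -/
/-!
For `q = p ^ k` and `#F = q²`, the map `T a = a ^ q + a` is additive, its kernel consists of roots
of `X ^ q + X` and its image lies in the fixed points of `c ↦ c ^ q`, i.e. among the roots of
`X ^ q - X`. Both sets thus have at most `q` elements, while `#F = #(im T) * #(ker T) = q²`, so `T`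
maps onto the fixed points with every fibre of size `q`. As `b ^ (q + 1)` is such a fixed point
for every `b`, each `b` contributes exactly `q` points `(a, b)` to the curve.
-/

open Finset Polynomial

theorem Polynomial.card_filter_eval_eq_zero_le {R : Type*} [CommRing R] [IsDomain R] [Fintype R]
    [DecidableEq R] {P : R[X]} (hP : P ≠ 0) : #{a | P.eval a = 0} ≤ P.natDegree :=
  card_le_degree_of_subset_roots fun a ha ↦ by
    rw [mem_roots hP]
    exact (mem_filter.mp ha).2

theorem card_filter_pow_add_mul_eq_le {R : Type*} [CommRing R] [IsDomain R] [Fintype R]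
    [DecidableEq R] {n : ℕ} (hn : 2 ≤ n) (u c : R) : #{a | a ^ n + u * a = c} ≤ n := by
  have hdeg : (X ^ n + C u * X - C c : R[X]).natDegree = n := by
    compute_degree
    · simp [show n ≠ 1 by omega, show n ≠ 0 by omega]
    all_goals omega
  have hP : (X ^ n + C u * X - C c : R[X]) ≠ 0 := by
    rintro h
    rw [h, natDegree_zero] at hdeg
    omega
  convert hdeg ▸ card_filter_eval_eq_zero_le hP using 3
  simp [sub_eq_zero]

theorem AddMonoidHom.card_eq_card_image_mul_card_ker {G M : Type*} [AddGroup G] [Fintype G]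
    [AddMonoid M] [DecidableEq M] (f : G →+ M) :
    Fintype.card G = #(univ.image f) * #{g | f g = 0} := by
  rw [← card_univ, card_eq_sum_card_image f univ, sum_const_nat]
  rintro _ hx
  obtain ⟨g, -, rfl⟩ := mem_image.mp hx
  exact card_fiber_eq_of_mem_range f ⟨g, rfl⟩ ⟨0, map_zero f⟩

theorem Finset.card_filter_prod_eq_sum {α β : Type*} [Fintype α] [Fintype β] (P : α → β → Prop)
    [∀ a b, Decidable (P a b)] : #{x : α × β | P x.1 x.2} = ∑ b, #{a | P a b} := by
  simp only [card_filter, Fintype.sum_prod_type_right]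

theorem pow_add_one_pow_eq_self_of_card_eq_sq {K : Type*} [GroupWithZero K] [Fintype K] {q : ℕ}
    (hK : Fintype.card K = q ^ 2) (b : K) : (b ^ (q + 1)) ^ q = b ^ (q + 1) := by
  rw [← pow_mul, add_one_mul, pow_add, ← sq, ← hK, FiniteField.pow_card, pow_succ']

/-- When `#F = q ^ 2` with `q = p ^ k`, this is the trace from `F` to its subfield `𝔽_q`. -/
def frobeniusTrace (F : Type*) [CommRing F] (p k : ℕ) [ExpChar F p] : F →+ F :=
  (iterateFrobenius F p k : F →+ F) + AddMonoidHom.id F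

theorem card_filter_pow_add_self_eq {F : Type*} [Field F] [Fintype F] [DecidableEq F] {p k : ℕ}
    [Fact p.Prime] [CharP F p] (hF : Fintype.card F = (p ^ k) ^ 2) {c : F}
    (hc : c ^ p ^ k = c) : #{a | a ^ p ^ k + a = c} = p ^ k := by
  set q := p ^ k
  have hq : 2 ≤ q := by
    have := hF ▸ Fintype.one_lt_card (α := F)
    nlinarith
  have hT (a : F) : frobeniusTrace F p k a = a ^ q + a := rfl
  have hker : #{a : F | a ^ q + a = 0} ≤ q := by
    simpa only [one_mul] using card_filter_pow_add_mul_eq_le hq (1 : F) 0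
  set S : Finset F := {c | c ^ q = c}
  have hfix : #S ≤ q := by
    simpa only [neg_one_mul, ← sub_eq_add_neg, sub_eq_zero] using
      card_filter_pow_add_mul_eq_le hq (-1 : F) 0
  have himage_sub : univ.image (frobeniusTrace F p k) ⊆ S := by
    intro c hc
    obtain ⟨a, -, rfl⟩ := mem_image.mp hc
    simp only [S, mem_filter, mem_univ, true_and, hT]
    rw [add_pow_char_pow, ← pow_mul, ← sq, ← hF, FiniteField.pow_card, add_comm]
  have hprod := (frobeniusTrace F p k).card_eq_card_image_mul_card_ker
  simp only [hT] at hprod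
  have himage_le := (card_le_card himage_sub).trans hfix
  have hker_eq : #{a : F | a ^ q + a = 0} = q := by nlinarith
  have himage_eq : univ.image (frobeniusTrace F p k) = S :=
    eq_of_subset_of_card_le himage_sub (by nlinarith)
  have hc_mem : c ∈ Set.range (frobeniusTrace F p k) := by
    rw [← Fintype.coe_image_univ, himage_eq]
    simpa [S] using hc
  simpa only [hT, hker_eq] using
    AddMonoidHom.card_fiber_eq_of_mem_range (frobeniusTrace F p k) hc_mem ⟨0, map_zero _⟩

/-- The Hermitian curve `x^{q0} + x = y^{q0+1}` over `𝔽_{q0²}` has exactly `q0³` affine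
rational points. -/
theorem hermitian_curve_point_count
    (q0 : ℕ) (hq0 : IsPrimePow q0)
    (F : Type*) [Field F] [Fintype F] [DecidableEq F] (hF : Fintype.card F = q0 ^ 2) :
    (Finset.univ.filter fun p : F × F => p.1 ^ q0 + p.1 = p.2 ^ (q0 + 1)).card = q0 ^ 3 := by
  obtain ⟨p, k, hp, -, rfl⟩ := hq0
  have := Fact.mk hp.nat_prime
  have : CharP F p := charP_of_card_eq_prime_pow (f := k * 2) (by rw [hF, pow_mul])
  calc #{x : F × F | x.1 ^ p ^ k + x.1 = x.2 ^ (p ^ k + 1)}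
      = ∑ b : F, #{a | a ^ p ^ k + a = b ^ (p ^ k + 1)} := 
        card_filter_prod_eq_sum (α := F) (β := F) fun a b ↦ a ^ p ^ k + a = b ^ (p ^ k + 1)
    _ = ∑ _b : F, p ^ k := sum_congr rfl fun b _ ↦
        card_filter_pow_add_self_eq hF (pow_add_one_pow_eq_self_of_card_eq_sq hF b)
    _ = (p ^ k) ^ 3 := by rw [sum_const, card_univ, hF, smul_eq_mul]; ring
end

section
/- Let q0 be a prime power, q = q0², and let t ≥ 1 be an integer with t·q0 + (q0-2)(q0+1) < q0³. Let V ⊆ 𝔽_q[x,y] be the 𝔽_q-linear span of the monomials x^i y^j for 0 ≤ i ≤ q0-2 and 0 ≤ j ≤ t. Then the evaluation map V → 𝔽_q^H, F ↦ (F(a,b))_{(a,b) ∈ H}, where H is the set of affine points of the Hermitian curve, is injective, and hence its image is a linear code of length q0³ and dimension (t+1)(q0-1). -/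
/-!
Write `G = ∑ⱼ fⱼ(x) yʲ` with `deg fⱼ ≤ q0 - 2`. On the curve `y ^ (q0 + 1) = x ^ q0 + x`, so
grouping `j = (q0 + 1) u + v` turns `G` into `∑_{v ≤ q0} P_v(x) yᵛ` with
`P_v = ∑ᵤ (x ^ q0 + x)ᵘ f_{(q0+1)u+v}`. The trace `a ^ q0 + a` and the norm `b ^ (q0 + 1)` map `F`
onto the subfield of order `q0`, with fibres of sizes `q0` and `q0 + 1` (over nonzero values);
this gives `|H| = q0³`. If `G` vanishes on `H` and `a ^ q0 + a ≠ 0`, the `q0 + 1` points above `a`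
kill the polynomial `∑ᵥ P_v(a) yᵛ` of degree `≤ q0`, so every `P_v(a) = 0`; where
`a ^ q0 + a = 0` the point `(a, 0)` gives `P_0(a) = 0`. The bound on `t` keeps `P_0` and
`(x ^ q0 + x) P_v` below degree `q0² = |F|`, so all `P_v` vanish identically, and as `deg fⱼ < q0`
this `(x ^ q0 + x)`-adic expansion forces every `fⱼ = 0`.
-/

noncomputable section

/-- The evaluation map sending a bivariate polynomial `G ∈ F[x,y]` to the vector of its
values `(G(a,b))_{(a,b) ∈ S}`. -/
def evalMv {F : Type*} [CommSemiring F] (S : Finset (F × F)) :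
    MvPolynomial (Fin 2) F →ₗ[F] (S → F) :=
  LinearMap.pi fun p => (MvPolynomial.aeval ![(p : F × F).1, (p : F × F).2]).toLinearMap

open Polynomial Finset

theorem Finset.sum_range_mul_eq_sum_sum {M : Type*} [AddCommMonoid M] (h : ℕ → M) (m n : ℕ) :
    ∑ j ∈ range (m * n), h j = ∑ u ∈ range n, ∑ v ∈ range m, h (m * u + v) := by
  induction n with
  | zero => simp
  | succ n ih => rw [Nat.mul_succ, sum_range_add, ih, sum_range_succ]

theorem Finset.card_fiber_eq_of_card_eq_mul {α β : Type*} [DecidableEq β] {s : Finset α}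
    {t : Finset β} {f : α → β} {m k : ℕ} (hf : ∀ x ∈ s, f x ∈ t) (ht : #t ≤ m)
    (hfib : ∀ y ∈ t, #{x ∈ s | f x = y} ≤ k) (hs : #s = m * k) :
    ∀ y ∈ t, #{x ∈ s | f x = y} = k := by
  have hsum : ∑ y ∈ t, #{x ∈ s | f x = y} = ∑ _y ∈ t, k := by
    refine le_antisymm (sum_le_sum hfib) ?_
    rw [← card_eq_sum_card_fiberwise hf, hs, sum_const, smul_eq_mul]
    exact Nat.mul_le_mul_right k ht
  exact (sum_eq_sum_iff_of_le hfib).1 hsum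

namespace Polynomial

variable {R : Type*} [CommRing R]

theorem natDegree_X_pow_add_X [Nontrivial R] {n : ℕ} (hn : 1 < n) :
    (X ^ n + X : R[X]).natDegree = n := by
  rw [natDegree_add_eq_left_of_degree_lt (by rw [degree_X, degree_X_pow]; exact_mod_cast hn),
    natDegree_X_pow]

theorem X_pow_add_X_ne_zero [Nontrivial R] {n : ℕ} (hn : 1 < n) : (X ^ n + X : R[X]) ≠ 0 :=
  ne_zero_of_natDegree_gt (n := 0) (by rw [natDegree_X_pow_add_X hn]; omega)

variable [IsDomain R]

theorem card_le_natDegree_of_forall_eval_eq_zero {p : R[X]} (hp : p ≠ 0) {s : Finset R}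
    (h : ∀ x ∈ s, p.eval x = 0) : #s ≤ p.natDegree := by
  by_contra! hs
  exact hp (eq_zero_of_natDegree_lt_card_of_eval_eq_zero' p s h hs)

theorem eq_zero_of_forall_sum_mul_pow_eq_zero {n : ℕ} (c : ℕ → R) {s : Finset R} (hs : n ≤ #s)
    (h : ∀ b ∈ s, ∑ w ∈ range n, c w * b ^ w = 0) : ∀ v < n, c v = 0 := by
  intro v hv
  set p : R[X] := ∑ w ∈ range n, C (c w) * X ^ w
  have hp : p = 0 := by
    refine eq_zero_of_natDegree_lt_card_of_eval_eq_zero' p s (fun b hb => ?_) ?_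
    · simpa [p, eval_finsetSum] using h b hb
    · refine (natDegree_sum_le_of_forall_le _ _ (n := n - 1) fun w hw => ?_).trans_lt (by omega)
      exact (natDegree_C_mul_X_pow_le _ _).trans (by rw [mem_range] at hw; omega)
  simpa [p, finsetSum_coeff, coeff_C_mul_X_pow, hv] using congrArg (coeff · v) hp

theorem eq_zero_of_sum_pow_mul_eq_zero {T : R[X]} (hT : T ≠ 0) {g : ℕ → R[X]}
    (hg : ∀ u, (g u).natDegree < T.natDegree) {n : ℕ}
    (hsum : ∑ u ∈ range n, T ^ u * g u = 0) : ∀ u < n, g u = 0 := by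
  induction n generalizing g with
  | zero => simp
  | succ n ih =>
    set S := ∑ u ∈ range n, T ^ u * g (u + 1)
    have hsum' : T * S + g 0 = 0 := by
      rw [sum_range_succ', pow_zero, one_mul] at hsum
      simpa [S, mul_sum, pow_succ', mul_assoc] using hsum
    have hg0 : g 0 = 0 :=
      eq_zero_of_dvd_of_natDegree_lt ⟨-S, by linear_combination hsum'⟩ (hg 0)
    have hS : S = 0 := by simpa [hg0, hT] using hsum'
    intro u hu
    cases u with
    | zero => exact hg0
    | succ u => exact ih (g := fun u => g (u + 1)) (fun u => hg _) hS u (by omega)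

end Polynomial

theorem LinearMap.injOn_span_of_linearIndependent_comp {R M M' ι : Type*} [Semiring R]
    [AddCommMonoid M] [Module R M] [AddCommMonoid M'] [Module R M'] {v : ι → M}
    (f : M →ₗ[R] M') (h : LinearIndependent R (f ∘ v)) :
    Set.InjOn f (Submodule.span R (Set.range v)) := by
  rw [← Finsupp.range_linearCombination]
  refine Function.Injective.injOn_range fun l₁ l₂ hl => h ?_
  simpa only [Function.comp_apply, Finsupp.apply_linearCombination] using hl

section FiniteField

variable {F : Type*} [Field F] [Fintype F] {q0 : ℕ}

theorem add_pow_of_card_eq_sq (hq0 : IsPrimePow q0) (hF : Fintype.card F = q0 ^ 2) (x y : F) :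
    (x + y) ^ q0 = x ^ q0 + y ^ q0 := by
  obtain ⟨p, k, hp, -, rfl⟩ := hq0
  have : Fact p.Prime := ⟨hp.nat_prime⟩
  have : CharP F p := charP_of_card_eq_prime_pow (f := k * 2) (by rw [hF, pow_mul])
  exact add_pow_char_pow x y p k

theorem pow_pow_of_card_eq_sq (hF : Fintype.card F = q0 ^ 2) (x : F) : (x ^ q0) ^ q0 = x := by
  rw [← pow_mul, ← sq, ← hF, FiniteField.pow_card]

theorem trace_pow_eq_self (hq0 : IsPrimePow q0) (hF : Fintype.card F = q0 ^ 2) (a : F) :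
    (a ^ q0 + a) ^ q0 = a ^ q0 + a := by
  rw [add_pow_of_card_eq_sq hq0 hF, pow_pow_of_card_eq_sq hF, add_comm]

theorem norm_pow_eq_self (hF : Fintype.card F = q0 ^ 2) (b : F) :
    (b ^ (q0 + 1)) ^ q0 = b ^ (q0 + 1) := by
  rw [pow_succ, mul_pow, pow_pow_of_card_eq_sq hF, mul_comm]

theorem card_filter_pow_eq_self_le [DecidableEq F] (h1 : 1 < q0) :
    #{d : F | d ^ q0 = d} ≤ q0 := by
  refine (card_le_natDegree_of_forall_eval_eq_zero (FiniteField.X_pow_card_sub_X_ne_zero F h1)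
    fun d hd => ?_).trans (FiniteField.X_pow_card_sub_X_natDegree_eq F h1).le
  simp_all

theorem card_filter_trace_eq_le [DecidableEq F] (h1 : 1 < q0) (c : F) :
    #{a : F | a ^ q0 + a = c} ≤ q0 := by
  have hdeg : (X - C c : F[X]).degree < q0 := by rw [degree_X_sub_C]; exact_mod_cast h1
  have hp : (X ^ q0 + (X - C c) : F[X]).natDegree = q0 := by
    rw [natDegree_add_eq_left_of_degree_lt (by rwa [degree_X_pow]), natDegree_X_pow]
  refine (card_le_natDegree_of_forall_eval_eq_zero (monic_X_pow_add hdeg).ne_zero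
    fun a ha => ?_).trans hp.le
  rw [mem_filter] at ha
  simp [← ha.2]

theorem card_filter_norm_eq_le [DecidableEq F] (c : F) :
    #{b : F | b ^ (q0 + 1) = c} ≤ q0 + 1 := by
  refine (card_le_natDegree_of_forall_eval_eq_zero (X_pow_sub_C_ne_zero q0.succ_pos c)
    fun b hb => ?_).trans natDegree_X_pow_sub_C.le
  rw [mem_filter] at hb
  simp [hb.2]

theorem card_filter_trace_eq (hq0 : IsPrimePow q0) (hF : Fintype.card F = q0 ^ 2)
    [DecidableEq F] {c : F} (hc : c ^ q0 = c) : #{a : F | a ^ q0 + a = c} = q0 := by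
  have h1 := hq0.one_lt
  refine card_fiber_eq_of_card_eq_mul (t := {d : F | d ^ q0 = d}) (fun a _ => ?_)
    (card_filter_pow_eq_self_le h1) (fun d _ => card_filter_trace_eq_le h1 d)
    (by rw [card_univ, hF, sq]) c (by simpa using hc)
  simpa using trace_pow_eq_self hq0 hF a

theorem card_filter_norm_eq (hq0 : IsPrimePow q0) (hF : Fintype.card F = q0 ^ 2)
    [DecidableEq F] {c : F} (hc : c ^ q0 = c) (hc0 : c ≠ 0) :
    #{b : F | b ^ (q0 + 1) = c} = q0 + 1 := by
  have h1 := hq0.one_lt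
  set K : Finset F := {d | d ^ q0 = d}
  have hmaps : ∀ b ∈ univ.erase 0, b ^ (q0 + 1) ∈ K.erase 0 := fun b hb => by
    simpa [K, norm_pow_eq_self hF] using hb
  have hK : #(K.erase 0) ≤ q0 - 1 := by
    rw [card_erase_of_mem (by simp [K, zero_pow h1.ne_bot])]
    exact Nat.sub_le_sub_right (card_filter_pow_eq_self_le h1) 1
  have hcard : #(univ.erase (0 : F)) = (q0 - 1) * (q0 + 1) := by
    rw [card_erase_of_mem (mem_univ _), card_univ, hF]
    obtain ⟨r, rfl⟩ : ∃ r, q0 = r + 1 := ⟨q0 - 1, by omega⟩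
    simp only [Nat.add_sub_cancel]
    ring_nf
    omega
  have hfib := card_fiber_eq_of_card_eq_mul hmaps hK
    (fun d _ => (card_le_card (filter_subset_filter _ (subset_univ _))).trans
      (card_filter_norm_eq_le d)) hcard c (by simp [K, hc, hc0])
  convert hfib using 2
  ext b
  simp only [mem_filter, mem_univ, mem_erase, true_and, and_true, iff_and_self]
  rintro hb rfl
  exact hc0 (by simp [← hb])

end FiniteField

def hermitianPoints (q0 : ℕ) (F : Type*) [Field F] [Fintype F] [DecidableEq F] :
    Finset (F × F) :=
  {p | p.1 ^ q0 + p.1 = p.2 ^ (q0 + 1)}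

theorem card_hermitianPoints {F : Type*} [Field F] [Fintype F] [DecidableEq F] {q0 : ℕ}
    (hq0 : IsPrimePow q0) (hF : Fintype.card F = q0 ^ 2) :
    #(hermitianPoints q0 F) = q0 ^ 3 := by
  rw [hermitianPoints, card_filter, Fintype.sum_prod_type_right]
  simp_rw [← card_filter]
  rw [sum_congr rfl fun b _ => card_filter_trace_eq hq0 hF (norm_pow_eq_self hF b), sum_const,
    card_univ, hF, smul_eq_mul]
  ring

/-- The coefficient of `y ^ v` in `∑ⱼ fⱼ(x) yʲ` once `y ^ (q0 + 1)` is replaced by `x ^ q0 + x`. -/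
def reducedCoeff {R : Type*} [CommSemiring R] (q0 t : ℕ) (f : ℕ → R[X]) (v : ℕ) :
    R[X] :=
  ∑ u ∈ range (t + 1), (X ^ q0 + X) ^ u * f ((q0 + 1) * u + v)

theorem sum_eval_mul_pow_eq_sum_reducedCoeff {R : Type*} [CommSemiring R] {q0 t : ℕ}
    {f : ℕ → R[X]} (hsupp : ∀ j, t < j → f j = 0) {a b : R} (hab : a ^ q0 + a = b ^ (q0 + 1)) :
    ∑ j ∈ range (t + 1), (f j).eval a * b ^ j =
      ∑ v ∈ range (q0 + 1), (reducedCoeff q0 t f v).eval a * b ^ v := by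
  have hext : ∑ j ∈ range (t + 1), (f j).eval a * b ^ j =
      ∑ j ∈ range ((q0 + 1) * (t + 1)), (f j).eval a * b ^ j :=
    sum_subset (range_subset_range.2 (Nat.le_mul_of_pos_left _ (by omega))) fun j _ hj => by
      rw [hsupp j (by simpa using hj), eval_zero, zero_mul]
  rw [hext, sum_range_mul_eq_sum_sum, sum_comm]
  refine sum_congr rfl fun v _ => ?_
  simp only [reducedCoeff, eval_finsetSum, sum_mul, eval_mul, eval_pow, eval_add, eval_X]
  refine sum_congr rfl fun u _ => ?_
  rw [pow_add, pow_mul, ← hab]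
  ring

theorem hermitian_degree_bound {q0 t u w : ℕ} (h2 : 2 ≤ q0)
    (hlt : t * q0 + (q0 - 2) * (q0 + 1) < q0 ^ 3) (hw : w ≤ 1) (hu : (q0 + 1) * u + w ≤ t) :
    (w + u) * q0 + (q0 - 2) < q0 ^ 2 := by
  obtain ⟨r, rfl⟩ : ∃ r, q0 = r + 2 := ⟨q0 - 2, by omega⟩
  simp only [Nat.add_sub_cancel] at hlt ⊢
  refine Nat.lt_of_mul_lt_mul_left (a := r + 3) ?_
  nlinarith [Nat.mul_le_mul_right (r + 2) hu, Nat.mul_le_mul_right ((r + 2) ^ 2) hw]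

section Vanishing

variable {F : Type*} [Field F] {q0 t : ℕ} {f : ℕ → F[X]}

theorem reducedCoeff_eval_eq_zero_of_trace_ne_zero [Fintype F] (hq0 : IsPrimePow q0)
    (hF : Fintype.card F = q0 ^ 2) (hsupp : ∀ j, t < j → f j = 0)
    (hvan : ∀ a b : F, a ^ q0 + a = b ^ (q0 + 1) → ∑ j ∈ range (t + 1), (f j).eval a * b ^ j = 0)
    {a : F} (ha : a ^ q0 + a ≠ 0) {v : ℕ} (hv : v < q0 + 1) :
    (reducedCoeff q0 t f v).eval a = 0 := by
  classical
  refine eq_zero_of_forall_sum_mul_pow_eq_zero (fun w => (reducedCoeff q0 t f w).eval a)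
    (card_filter_norm_eq hq0 hF (trace_pow_eq_self hq0 hF a) ha).ge (fun b hb => ?_) v hv
  rw [mem_filter] at hb
  rw [← sum_eval_mul_pow_eq_sum_reducedCoeff hsupp hb.2.symm]
  exact hvan a b hb.2.symm

theorem reducedCoeff_zero_eval_eq_zero_of_trace_eq_zero (hsupp : ∀ j, t < j → f j = 0)
    (hvan : ∀ a b : F, a ^ q0 + a = b ^ (q0 + 1) → ∑ j ∈ range (t + 1), (f j).eval a * b ^ j = 0)
    {a : F} (ha : a ^ q0 + a = 0) : (reducedCoeff q0 t f 0).eval a = 0 := by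
  have hab : a ^ q0 + a = 0 ^ (q0 + 1) := by simp [ha]
  have := sum_eval_mul_pow_eq_sum_reducedCoeff hsupp hab
  rw [hvan a 0 hab, sum_range_succ'] at this
  simpa using this.symm

theorem natDegree_pow_mul_reducedCoeff_lt (h2 : 2 ≤ q0)
    (hlt : t * q0 + (q0 - 2) * (q0 + 1) < q0 ^ 3) (hdeg : ∀ j, (f j).natDegree ≤ q0 - 2)
    (hsupp : ∀ j, t < j → f j = 0) {v w : ℕ} (hw : w ≤ 1) (hwv : w ≤ v) :
    ((X ^ q0 + X) ^ w * reducedCoeff q0 t f v).natDegree < q0 ^ 2 := by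
  rw [reducedCoeff, mul_sum]
  refine (natDegree_sum_le_of_forall_le _ _ (n := q0 ^ 2 - 1) fun u _ => ?_).trans_lt
    (by have := Nat.one_le_two_pow.trans (Nat.pow_le_pow_left h2 2); omega)
  by_cases hu : (q0 + 1) * u + v ≤ t
  · rw [← mul_assoc, ← pow_add]
    have := hermitian_degree_bound h2 hlt hw (u := u) (by omega)
    calc _ ≤ (w + u) * q0 + (q0 - 2) := natDegree_mul_le.trans (add_le_add
            (natDegree_pow_le.trans (by rw [natDegree_X_pow_add_X h2])) (hdeg _))
      _ ≤ q0 ^ 2 - 1 := by omega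
  · rw [hsupp _ (by omega), mul_zero, mul_zero, natDegree_zero]
    exact Nat.zero_le _

theorem reducedCoeff_eq_zero [Fintype F] (hq0 : IsPrimePow q0) (hF : Fintype.card F = q0 ^ 2)
    (hlt : t * q0 + (q0 - 2) * (q0 + 1) < q0 ^ 3) (hdeg : ∀ j, (f j).natDegree ≤ q0 - 2)
    (hsupp : ∀ j, t < j → f j = 0)
    (hvan : ∀ a b : F, a ^ q0 + a = b ^ (q0 + 1) → ∑ j ∈ range (t + 1), (f j).eval a * b ^ j = 0)
    {v : ℕ} (hv : v < q0 + 1) : reducedCoeff q0 t f v = 0 := by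
  classical
  have h2 := hq0.two_le
  have hT : (X ^ q0 + X : F[X]) ≠ 0 := X_pow_add_X_ne_zero h2
  -- Where `a ^ q0 + a = 0` only the constant coefficient is known to vanish, so for `v ≥ 1`
  -- the factor `x ^ q0 + x` is put in by hand.
  have hprod : (X ^ q0 + X) ^ min v 1 * reducedCoeff q0 t f v = 0 := by
    refine eq_zero_of_natDegree_lt_card_of_eval_eq_zero' _ univ (fun a _ => ?_) ?_
    · rw [eval_mul, eval_pow, eval_add, eval_pow, eval_X]
      by_cases ha : a ^ q0 + a = 0
      · rcases v with _ | v
        · simp [reducedCoeff_zero_eval_eq_zero_of_trace_eq_zero hsupp hvan ha]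
        · simp [ha]
      · rw [reducedCoeff_eval_eq_zero_of_trace_ne_zero hq0 hF hsupp hvan ha hv, mul_zero]
    · rw [card_univ, hF]
      exact natDegree_pow_mul_reducedCoeff_lt h2 hlt hdeg hsupp (min_le_right _ _)
        (min_le_left _ _)
  simpa [hT] using hprod

theorem eq_zero_of_forall_sum_eval_mul_pow_eq_zero [Fintype F] (hq0 : IsPrimePow q0)
    (hF : Fintype.card F = q0 ^ 2) (hlt : t * q0 + (q0 - 2) * (q0 + 1) < q0 ^ 3)
    (hdeg : ∀ j, (f j).natDegree ≤ q0 - 2) (hsupp : ∀ j, t < j → f j = 0)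
    (hvan : ∀ a b : F, a ^ q0 + a = b ^ (q0 + 1) → ∑ j ∈ range (t + 1), (f j).eval a * b ^ j = 0)
    (j : ℕ) : f j = 0 := by
  rcases le_or_gt j t with hj | hj
  · have h2 := hq0.two_le
    have hT : (X ^ q0 + X : F[X]) ≠ 0 := X_pow_add_X_ne_zero h2
    have hdigits := eq_zero_of_sum_pow_mul_eq_zero hT
      (fun u => (hdeg _).trans_lt (by rw [natDegree_X_pow_add_X h2]; omega))
      (reducedCoeff_eq_zero hq0 hF hlt hdeg hsupp hvan (Nat.mod_lt j q0.succ_pos))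
      (j / (q0 + 1)) (by have := Nat.div_le_self j (q0 + 1); omega)
    rwa [Nat.div_add_mod] at hdigits
  · exact hsupp j hj

end Vanishing

theorem linearIndepOn_evalMv_hermitianPoints {F : Type*} [Field F] [Fintype F] [DecidableEq F]
    {q0 t : ℕ} (hq0 : IsPrimePow q0) (hF : Fintype.card F = q0 ^ 2)
    (hlt : t * q0 + (q0 - 2) * (q0 + 1) < q0 ^ 3) :
    LinearIndepOn F (fun ij : ℕ × ℕ => evalMv (hermitianPoints q0 F)
      (MvPolynomial.X 0 ^ ij.1 * MvPolynomial.X 1 ^ ij.2)) ↑(range (q0 - 1) ×ˢ range (t + 1)) := by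
  rw [linearIndepOn_finset_iff]
  intro g hg
  set f : ℕ → F[X] := fun j => if j ≤ t then ∑ i ∈ range (q0 - 1), C (g (i, j)) * X ^ i else 0
  have hdeg : ∀ j, (f j).natDegree ≤ q0 - 2 := by
    intro j
    unfold f
    split_ifs
    · exact natDegree_sum_le_of_forall_le _ _ fun i hi =>
        (natDegree_C_mul_X_pow_le _ _).trans (by rw [mem_range] at hi; omega)
    · simp
  have hsupp : ∀ j, t < j → f j = 0 := fun j hj => if_neg (by omega)
  have hvan : ∀ a b : F, a ^ q0 + a = b ^ (q0 + 1) →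
      ∑ j ∈ range (t + 1), (f j).eval a * b ^ j = 0 := by
    intro a b hab
    have := congrFun hg ⟨(a, b), by simp [hermitianPoints, hab]⟩
    simp only [evalMv, Finset.sum_apply, Pi.smul_apply, LinearMap.pi_apply,
      AlgHom.toLinearMap_apply, MvPolynomial.aeval_eq_eval, map_mul, map_pow, MvPolynomial.eval_X,
      Matrix.cons_val_zero, Matrix.cons_val_one, smul_eq_mul, sum_product_right,
      Pi.zero_apply] at this
    rw [← this]
    refine sum_congr rfl fun j hj => ?_
    simp [f, Nat.lt_succ_iff.1 (mem_range.1 hj), eval_finsetSum, sum_mul, mul_assoc]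
  have hf := eq_zero_of_forall_sum_eval_mul_pow_eq_zero hq0 hF hlt hdeg hsupp hvan
  rintro ⟨i, j⟩ hij
  rw [mem_product, mem_range, mem_range] at hij
  simpa [f, finsetSum_coeff, coeff_C_mul_X_pow, hij.1, (by omega : j ≤ t)] using
    congrArg (coeff · i) (hf j)

theorem hermitian_lrc_dimension_general
    (q0 t : ℕ) (hq0 : IsPrimePow q0)
    (hlt : t * q0 + (q0 - 2) * (q0 + 1) < q0 ^ 3)
    (F : Type*) [Field F] [Fintype F] [DecidableEq F] (hF : Fintype.card F = q0 ^ 2)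
    (H : Finset (F × F))
    (hH : H = Finset.univ.filter fun p : F × F => p.1 ^ q0 + p.1 = p.2 ^ (q0 + 1))
    (V : Submodule F (MvPolynomial (Fin 2) F))
    (hV : V = Submodule.span F
      {p : MvPolynomial (Fin 2) F | ∃ i j : ℕ, i ≤ q0 - 2 ∧ j ≤ t ∧
        p = MvPolynomial.X 0 ^ i * MvPolynomial.X 1 ^ j}) :
    Set.InjOn (⇑(evalMv H)) (V : Set (MvPolynomial (Fin 2) F)) ∧
    H.card = q0 ^ 3 ∧
    Module.finrank F (Submodule.map (evalMv H) V) = (t + 1) * (q0 - 1) := by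
  obtain rfl : H = hermitianPoints q0 F := hH
  set box := range (q0 - 1) ×ˢ range (t + 1)
  set monomial : ℕ × ℕ → MvPolynomial (Fin 2) F :=
    fun ij => MvPolynomial.X 0 ^ ij.1 * MvPolynomial.X 1 ^ ij.2
  have hVbox : V = Submodule.span F (Set.range fun ij : box => monomial ij) := by
    have h2 := hq0.two_le
    rw [hV]
    congr 1
    ext p
    simp only [Set.mem_ofPred_eq, Set.mem_range, Subtype.exists, mem_product, mem_range,
      monomial, box]
    constructor
    · rintro ⟨i, j, hi, hj, rfl⟩
      exact ⟨(i, j), ⟨by omega, by omega⟩, rfl⟩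
    · rintro ⟨⟨i, j⟩, ⟨hi, hj⟩, rfl⟩
      exact ⟨i, j, by omega, by omega, rfl⟩
  have hli : LinearIndependent F (evalMv (hermitianPoints q0 F) ∘ fun ij : box => monomial ij) :=
    linearIndepOn_evalMv_hermitianPoints hq0 hF hlt
  refine ⟨?_, card_hermitianPoints hq0 hF, ?_⟩
  · rw [hVbox]
    exact (evalMv _).injOn_span_of_linearIndependent_comp hli
  · rw [hVbox, Submodule.map_span, ← Set.range_comp, finrank_span_eq_card hli, Fintype.card_coe,
      card_product, card_range, card_range, mul_comm]

/-- The evaluation map of `V = span{x^i y^j : i ≤ q0-2, j ≤ t}` at the affine points `H`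
of the Hermitian curve is injective; hence its image is a linear code of length `q0³`
and dimension `(t+1)(q0-1)`. -/
theorem hermitian_lrc_dimension
    (q0 t : ℕ) (hq0 : IsPrimePow q0) (ht : 1 ≤ t)
    (hlt : t * q0 + (q0 - 2) * (q0 + 1) < q0 ^ 3)
    (F : Type*) [Field F] [Fintype F] [DecidableEq F] (hF : Fintype.card F = q0 ^ 2)
    (H : Finset (F × F))
    (hH : H = Finset.univ.filter fun p : F × F => p.1 ^ q0 + p.1 = p.2 ^ (q0 + 1))
    (V : Submodule F (MvPolynomial (Fin 2) F))
    (hV : V = Submodule.span F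
      {p : MvPolynomial (Fin 2) F | ∃ i j : ℕ, i ≤ q0 - 2 ∧ j ≤ t ∧
        p = MvPolynomial.X 0 ^ i * MvPolynomial.X 1 ^ j}) :
    Set.InjOn (⇑(evalMv H)) (V : Set (MvPolynomial (Fin 2) F)) ∧
    H.card = q0 ^ 3 ∧
    Module.finrank F (Submodule.map (evalMv H) V) = (t + 1) * (q0 - 1) :=
  hermitian_lrc_dimension_general q0 t hq0 hlt F hF H hH V hV
end
end

section
/- Let q0 be a prime power, q = q0², and let t ≥ 1 be an integer with t(q0+1) + q0(q0-1) < q0³ - q0. Let M = {a ∈ 𝔽_q : a^{q0} + a = 0}, let S = {(a,b) ∈ 𝔽_q × 𝔽_q : a^{q0} + a = b^{q0+1}, a ∉ M}, so |S| = q0³ - q0, and let W ⊆ 𝔽_q[x,y] be the 𝔽_q-linear span of the monomials x^j y^i for 0 ≤ j ≤ t and 0 ≤ i ≤ q0-1. Then the evaluation map W → 𝔽_q^S, F ↦ (F(a,b))_{(a,b) ∈ S}, is injective, its image C is a linear code of length q0³ - q0 and dimension (t+1)q0, and the minimum distance of C is at least (q0³ - q0) - t(q0+1) - q0(q0-1).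 -/
/-!
Weight `x ^ j * y ^ i` by `j (q0 + 1) + i q0`, its pole order at infinity on the Hermitian curve;
the weight is injective on exponents with `i ≤ q0`. On the curve `y ^ (q0 + 1)` may be rewritten
as `x ^ q0 + x`, which keeps the top weight of a polynomial whose top-weight monomial is unique.
Once the `y`-degree is at most `q0`, vanishing on `S` forces every `y`-row to vanish at the
`q0 ^ 2 - q0` values `a ∉ M` (each fiber has `q0 + 1` points). Hence a polynomial whose top weight
is that of some `x ^ j * y ^ i` with `i ≤ q0`, `j < q0 ^ 2 - q0` does not vanish on `S`, which
gives injectivity on `W`. For `P ∈ W` of top weight `ω`, the products of `P` with `|S| - ω`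
suitable monomials stay linearly independent on `S` and vanish wherever `P` does, so `P` is
nonzero at at least `|S| - ω ≥ |S| - t (q0 + 1) - q0 (q0 - 1)` points of `S`.
-/

noncomputable section

namespace Hermitian

open Polynomial Polynomial.Bivariate Finset

/-- `(i, j)` stands for `x ^ j * y ^ i`: for `P : R[X][Y]`, `(P.coeff i).coeff j` is its
coefficient. -/
def weight (q0 i j : ℕ) : ℕ := j * (q0 + 1) + i * q0

lemma weight_add (q0 i j i' j' : ℕ) :
    weight q0 (i + i') (j + j') = weight q0 i j + weight q0 i' j' := by
  unfold weight; ring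

lemma weight_add_succ_left (q0 i j : ℕ) :
    weight q0 (i + (q0 + 1)) j = weight q0 i (j + q0) := by
  unfold weight; ring

lemma weight_lt_weight_iff_right {q0 i j j' : ℕ} : weight q0 i j < weight q0 i j' ↔ j < j' := by
  unfold weight; constructor <;> intro h <;> nlinarith

lemma weight_succ_lt {q0 : ℕ} (hq : 2 ≤ q0) (i j : ℕ) :
    weight q0 i (j + 1) < weight q0 (i + (q0 + 1)) j := by
  unfold weight; nlinarith

lemma eq_and_eq_of_weight_eq {q0 i j i' j' : ℕ} (hi : i ≤ q0) (hi' : i' ≤ q0)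
    (h : weight q0 i j = weight q0 i' j') : i = i' ∧ j = j' := by
  unfold weight at h
  -- `i' - i` is a multiple of `q0 + 1` of absolute value at most `q0`
  have hz : ((i' : ℤ) - i) = (i' + j' - i - j) * (q0 + 1) := by
    have := congrArg (fun n : ℕ => (n : ℤ)) h
    push_cast at this
    linarith
  have hk : (i' : ℤ) + j' - i - j = 0 := by
    by_contra hk
    rcases lt_or_gt_of_ne hk with hk | hk <;> nlinarith
  obtain rfl : i = i' := by
    rw [hk, zero_mul] at hz
    omega
  exact ⟨rfl, by nlinarith⟩

section Shifts

/-- Exponents `(i, j)`, `i ≤ q0`, of the monomials `x ^ j * y ^ i` whose product with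
`x ^ j₀ * y ^ i₀` has the weight of some `x ^ j' * y ^ i'` with `i' ≤ q0` and `j' < n`; the second
piece is where `y ^ (i₀ + i)` must be reduced to `x ^ q0 * y ^ (i₀ + i - q0 - 1)`. -/
def shifts (q0 n i₀ j₀ : ℕ) : Finset (ℕ × ℕ) :=
  range (q0 + 1 - i₀) ×ˢ range (n - j₀) ∪ Ico (q0 + 1 - i₀) (q0 + 1) ×ˢ range (n - j₀ - q0)

variable {q0 n i₀ j₀ : ℕ}

lemma le_of_mem_shifts {m : ℕ × ℕ} (hm : m ∈ shifts q0 n i₀ j₀) : m.1 ≤ q0 := by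
  simp only [shifts, mem_union, mem_product, mem_range, mem_Ico] at hm
  omega

lemma exists_weight_eq_of_mem_shifts (hi₀ : i₀ ≤ q0) {m : ℕ × ℕ} (hm : m ∈ shifts q0 n i₀ j₀) :
    ∃ i j, i ≤ q0 ∧ j < n ∧ weight q0 i j = weight q0 (i₀ + m.1) (j₀ + m.2) := by
  simp only [shifts, mem_union, mem_product, mem_range, mem_Ico] at hm
  rcases hm with hm | hm
  · exact ⟨i₀ + m.1, j₀ + m.2, by omega, by omega, rfl⟩
  · refine ⟨i₀ + m.1 - (q0 + 1), j₀ + m.2 + q0, by omega, by omega, ?_⟩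
    rw [← weight_add_succ_left, Nat.sub_add_cancel (by omega)]

lemma card_shifts (hi₀ : i₀ ≤ q0) : (q0 + 1) * n - weight q0 i₀ j₀ ≤ #(shifts q0 n i₀ j₀) := by
  have hdisj : Disjoint (range (q0 + 1 - i₀) ×ˢ range (n - j₀))
      (Ico (q0 + 1 - i₀) (q0 + 1) ×ˢ range (n - j₀ - q0)) :=
    disjoint_product.2 (Or.inl (disjoint_left.2 fun i h₁ h₂ => by
      simp only [mem_range, mem_Ico] at h₁ h₂; omega))
  rw [shifts, card_union_of_disjoint hdisj, card_product, card_product, card_range, card_range,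
    card_range, Nat.card_Ico, Nat.sub_sub_self (by omega), weight]
  obtain ⟨k, hk⟩ : ∃ k, q0 + 1 = k + i₀ := ⟨q0 + 1 - i₀, by omega⟩
  rw [hk, Nat.add_sub_cancel, tsub_le_iff_right]
  obtain hj | hj := le_or_gt (n - j₀) q0
  · rw [Nat.sub_eq_zero_of_le hj, mul_zero, add_zero]
    have h₁ : (k + i₀) * n ≤ (k + i₀) * (j₀ + (n - j₀)) := Nat.mul_le_mul_left _ (by omega)
    have h₂ : i₀ * (n - j₀) ≤ i₀ * q0 := Nat.mul_le_mul_left _ hj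
    nlinarith
  · obtain ⟨m, rfl⟩ : ∃ m, n = j₀ + q0 + m := ⟨n - j₀ - q0, by omega⟩
    rw [show j₀ + q0 + m - j₀ = q0 + m by omega, show q0 + m - q0 = m by omega]
    nlinarith

end Shifts

lemma cube_sub_self_eq (q0 : ℕ) : q0 ^ 3 - q0 = (q0 + 1) * (q0 ^ 2 - q0) := by
  have h₁ : (q0 + 1) * q0 ^ 2 = q0 ^ 3 + q0 ^ 2 := by ring
  have h₂ : (q0 + 1) * q0 = q0 ^ 2 + q0 := by ring
  rw [Nat.mul_sub, h₁, h₂]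
  omega

section TopMonomial

variable {R : Type*} [Semiring R] {q0 : ℕ}

def IsTopMonomial (q0 : ℕ) (P : R[X][Y]) (i₀ j₀ : ℕ) : Prop :=
  (P.coeff i₀).coeff j₀ ≠ 0 ∧
    ∀ i j, (P.coeff i).coeff j ≠ 0 → (i, j) ≠ (i₀, j₀) → weight q0 i j < weight q0 i₀ j₀

namespace IsTopMonomial

variable {P : R[X][Y]} {i₀ j₀ : ℕ}

lemma weight_le (h : IsTopMonomial q0 P i₀ j₀) {i j : ℕ} (hij : (P.coeff i).coeff j ≠ 0) :
    weight q0 i j ≤ weight q0 i₀ j₀ := by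
  by_cases he : (i, j) = (i₀, j₀)
  · simp_all
  · exact (h.2 i j hij he).le

lemma le_natDegree (h : IsTopMonomial q0 P i₀ j₀) : i₀ ≤ P.natDegree :=
  le_natDegree_of_ne_zero fun h0 => h.1 (by rw [h0, coeff_zero])

lemma natDegree_coeff_le (h : IsTopMonomial q0 P i₀ j₀) : (P.coeff i₀).natDegree ≤ j₀ := by
  refine natDegree_le_iff_coeff_eq_zero.2 fun j hj => ?_
  by_contra hne
  exact absurd (weight_lt_weight_iff_right.1 (h.2 i₀ j hne (by simp [hj.ne']))) hj.not_gt

lemma add_of_weight_lt (h : IsTopMonomial q0 P i₀ j₀) {Q : R[X][Y]}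
    (hQ : ∀ i j, (Q.coeff i).coeff j ≠ 0 → weight q0 i j < weight q0 i₀ j₀) :
    IsTopMonomial q0 (P + Q) i₀ j₀ := by
  have hQ₀ : (Q.coeff i₀).coeff j₀ = 0 := by
    by_contra hne; exact (hQ _ _ hne).false
  refine ⟨by simpa [hQ₀] using h.1, fun i j hij hne => ?_⟩
  rw [coeff_add, coeff_add] at hij
  by_cases hP : (P.coeff i).coeff j = 0
  · exact hQ i j (by simpa [hP] using hij)
  · exact h.2 i j hP hne

end IsTopMonomial

lemma coeff_coeff_C_mul_X_pow (r : R[X]) (e i j : ℕ) :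
    ((C r * X ^ e).coeff i).coeff j = if i = e then r.coeff j else 0 := by
  rw [coeff_C_mul_X_pow]; split_ifs <;> simp

lemma coeff_coeff_sum_monomial {s : Finset (ℕ × ℕ)} (g : s → R)
    (i j : ℕ) :
    ((∑ m : s, monomial m.1.1 (monomial m.1.2 (g m)) : R[X][Y]).coeff i).coeff j =
      if h : (i, j) ∈ s then g ⟨(i, j), h⟩ else 0 := by
  have key : ∀ m : s, ((monomial m.1.1 (monomial m.1.2 (g m)) : R[X][Y]).coeff i).coeff j =
      if (m : ℕ × ℕ) = (i, j) then g m else 0 := by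
    rintro ⟨⟨i', j'⟩, hm⟩
    simp only [coeff_monomial, Prod.mk.injEq]
    by_cases hi : i' = i <;> by_cases hj : j' = j <;> simp [hi, hj, coeff_monomial]
  simp only [finsetSum_coeff, key]
  split_ifs with h
  · rw [Fintype.sum_eq_single ⟨(i, j), h⟩ fun m hm => if_neg fun he => hm (Subtype.ext he)]
    simp
  · exact Finset.sum_eq_zero fun m _ => if_neg fun (he : (m : ℕ × ℕ) = (i, j)) => h (he ▸ m.2)

lemma natDegree_le_of_coeff_coeff_ne_zero {P : R[X][Y]} {n : ℕ}
    (h : ∀ i j, (P.coeff i).coeff j ≠ 0 → i ≤ n) : P.natDegree ≤ n :=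
  natDegree_le_iff_coeff_eq_zero.2 fun i hi => ext fun j => by
    by_contra hij
    exact hi.not_ge (h i j hij)

lemma isTopMonomial_C_mul_X_pow {r : R[X]} (hr : r ≠ 0) (i : ℕ) :
    IsTopMonomial q0 (C r * X ^ i) i r.natDegree := by
  refine ⟨by simpa [coeff_C_mul_X_pow] using hr, fun i' j hj hne => ?_⟩
  rw [coeff_C_mul_X_pow] at hj
  split_ifs at hj with hi
  · subst hi
    exact weight_lt_weight_iff_right.2 <| (le_natDegree_of_ne_zero hj).lt_of_ne (by simpa using hne)
  · simp at hj

lemma exists_isTopMonomial {P : R[X][Y]} (hP : P ≠ 0) (hdeg : P.natDegree ≤ q0) :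
    ∃ i₀ j₀, IsTopMonomial q0 P i₀ j₀ := by
  classical
  set T := P.support.biUnion fun i => (P.coeff i).support.image (Prod.mk i)
  have hT : ∀ i j, (i, j) ∈ T ↔ (P.coeff i).coeff j ≠ 0 := by
    intro i j; simp only [T, Finset.mem_biUnion, Finset.mem_image, mem_support_iff]
    constructor
    · rintro ⟨i', -, j', hj', hij⟩; cases hij; exact hj'
    · intro h; exact ⟨i, fun h0 => h (by simp [h0]), j, h, rfl⟩
  have hTne : T.Nonempty := by
    obtain ⟨i, hi⟩ := P.support_nonempty.2 hP
    obtain ⟨j, hj⟩ := (P.coeff i).support_nonempty.2 (mem_support_iff.1 hi)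
    exact ⟨(i, j), (hT i j).2 (mem_support_iff.1 hj)⟩
  obtain ⟨⟨i₀, j₀⟩, hmem, hmax⟩ := T.exists_max_image (fun p => weight q0 p.1 p.2) hTne
  have hrow : ∀ i j, (P.coeff i).coeff j ≠ 0 → i ≤ q0 := fun i j h =>
    (le_natDegree_of_ne_zero fun h0 => h (by simp [h0])).trans hdeg
  refine ⟨i₀, j₀, (hT _ _).1 hmem, fun i j hij hne => ?_⟩
  refine (hmax (i, j) ((hT _ _).2 hij)).lt_of_ne fun heq => hne ?_
  obtain ⟨rfl, rfl⟩ := eq_and_eq_of_weight_eq (hrow i j hij) (hrow i₀ j₀ ((hT _ _).1 hmem)) heq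
  rfl

lemma coeff_coeff_mul (P Q : R[X][Y]) (i j : ℕ) :
    ((P * Q).coeff i).coeff j = ∑ a ∈ antidiagonal i, ∑ b ∈ antidiagonal j,
      (P.coeff a.1).coeff b.1 * (Q.coeff a.2).coeff b.2 := by
  rw [coeff_mul, finsetSum_coeff]
  exact Finset.sum_congr rfl fun a _ => coeff_mul _ _ _

lemma IsTopMonomial.mul [NoZeroDivisors R] {P Q : R[X][Y]} {i₁ j₁ i₂ j₂ : ℕ}
    (hP : IsTopMonomial q0 P i₁ j₁) (hQ : IsTopMonomial q0 Q i₂ j₂) :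
    IsTopMonomial q0 (P * Q) (i₁ + i₂) (j₁ + j₂) := by
  have key : ∀ a b : ℕ × ℕ, (P.coeff a.1).coeff b.1 * (Q.coeff a.2).coeff b.2 ≠ 0 →
      (a, b) ≠ ((i₁, i₂), (j₁, j₂)) →
      weight q0 (a.1 + a.2) (b.1 + b.2) < weight q0 (i₁ + i₂) (j₁ + j₂) := by
    intro a b hab hne
    have h₁ := left_ne_zero_of_mul hab
    have h₂ := right_ne_zero_of_mul hab
    rw [weight_add, weight_add]
    by_cases e₁ : (a.1, b.1) = (i₁, j₁)
    · have e₂ : (a.2, b.2) ≠ (i₂, j₂) := fun e₂ => hne (by simp_all [Prod.ext_iff])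
      exact add_lt_add_of_le_of_lt (hP.weight_le h₁) (hQ.2 _ _ h₂ e₂)
    · exact add_lt_add_of_lt_of_le (hP.2 _ _ h₁ e₁) (hQ.weight_le h₂)
  refine ⟨?_, fun i j hij hne => ?_⟩
  · rw [coeff_coeff_mul, Finset.sum_eq_single (i₁, i₂), Finset.sum_eq_single (j₁, j₂)]
    · exact mul_ne_zero hP.1 hQ.1
    · intro b hb hne
      by_contra h
      have := key (i₁, i₂) b h (by simp [Prod.ext_iff] at hne ⊢; omega)
      simp [HasAntidiagonal.mem_antidiagonal.1 hb] at this
    · simp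
    · intro a ha hne
      refine Finset.sum_eq_zero fun b hb => ?_
      by_contra h
      have := key a b h (by simp [Prod.ext_iff] at hne ⊢; omega)
      simp [HasAntidiagonal.mem_antidiagonal.1 ha, HasAntidiagonal.mem_antidiagonal.1 hb] at this
    · simp
  · rw [coeff_coeff_mul] at hij
    obtain ⟨a, ha, hij⟩ := Finset.exists_ne_zero_of_sum_ne_zero hij
    obtain ⟨b, hb, hab⟩ := Finset.exists_ne_zero_of_sum_ne_zero hij
    rw [HasAntidiagonal.mem_antidiagonal] at ha hb
    have := key a b hab fun h => hne (by simp_all [Prod.ext_iff])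
    rwa [ha, hb] at this

end TopMonomial

section Reduction

variable {R : Type*} [CommRing R] {q0 : ℕ}

lemma IsTopMonomial.eraseLead {P : R[X][Y]} {i₀ j₀ : ℕ} (h : IsTopMonomial q0 P i₀ j₀)
    (hi₀ : i₀ ≠ P.natDegree) : IsTopMonomial q0 P.eraseLead i₀ j₀ := by
  refine ⟨by rw [eraseLead_coeff_of_ne _ hi₀]; exact h.1, fun i j hij hne => h.2 i j ?_ hne⟩
  rw [eraseLead_coeff] at hij
  split_ifs at hij
  · simp at hij
  · exact hij

lemma weight_C_mul_X_pow_mul_X_pow_lt {c : R[X]} {e ω : ℕ}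
    (hc : ∀ j, c.coeff j ≠ 0 → weight q0 (e + (q0 + 1)) j < ω) :
    ∀ i j, ((C (c * X ^ q0) * X ^ e).coeff i).coeff j ≠ 0 → weight q0 i j < ω := by
  intro i j hij
  rw [coeff_coeff_C_mul_X_pow, coeff_mul_X_pow'] at hij
  split_ifs at hij with hi hj <;> try simp at hij
  subst hi
  simpa [weight_add_succ_left, Nat.sub_add_cancel hj] using hc _ hij

lemma weight_C_mul_X_mul_X_pow_lt {c : R[X]} {e ω : ℕ} (hq : 2 ≤ q0)
    (hc : ∀ j, c.coeff j ≠ 0 → weight q0 (e + (q0 + 1)) j ≤ ω) :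
    ∀ i j, ((C (c * X) * X ^ e).coeff i).coeff j ≠ 0 → weight q0 i j < ω := by
  intro i j hij
  rw [coeff_coeff_C_mul_X_pow, ← pow_one X, coeff_mul_X_pow'] at hij
  split_ifs at hij with hi hj <;> try simp at hij
  subst hi
  have := weight_succ_lt hq i (j - 1)
  rw [Nat.sub_add_cancel hj] at this
  exact this.trans_le (hc _ hij)

def reduceStep (q0 : ℕ) (P : R[X][Y]) : R[X][Y] :=
  P.eraseLead + C (P.leadingCoeff * X ^ q0) * X ^ (P.natDegree - (q0 + 1)) +
    C (P.leadingCoeff * X) * X ^ (P.natDegree - (q0 + 1))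

variable {P : R[X][Y]}

lemma natDegree_reduceStep_lt (hd : q0 + 1 ≤ P.natDegree) :
    (reduceStep q0 P).natDegree < P.natDegree := by
  have hle : ∀ r : R[X], (C r * X ^ (P.natDegree - (q0 + 1))).natDegree ≤ P.natDegree - 1 :=
    fun r => (natDegree_C_mul_X_pow_le r _).trans (by omega)
  have := natDegree_add_le_of_degree_le (natDegree_add_le_of_degree_le
    (eraseLead_natDegree_le P) (hle (P.leadingCoeff * X ^ q0))) (hle (P.leadingCoeff * X))
  rw [reduceStep]
  omega

lemma evalEval_reduceStep (hd : q0 + 1 ≤ P.natDegree) {a b : R} (hab : a ^ q0 + a = b ^ (q0 + 1)) :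
    (reduceStep q0 P).evalEval a b = P.evalEval a b := by
  conv_rhs => rw [← P.eraseLead_add_C_mul_X_pow, ← Nat.sub_add_cancel hd, pow_add]
  simp only [reduceStep, evalEval_add, evalEval_mul, evalEval_C, evalEval_pow, evalEval_X,
    eval_mul, eval_pow, eval_X, ← hab]
  ring

/-- `c x ^ q0 y ^ e` has the weight of `c y ^ (e + q0 + 1)`, and `c x y ^ e` a smaller one. -/
lemma IsTopMonomial.exists_reduceStep (hq : 2 ≤ q0) {i₀ j₀ : ℕ} (h : IsTopMonomial q0 P i₀ j₀)
    (hd : q0 + 1 ≤ P.natDegree) :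
    ∃ i₁ j₁, weight q0 i₁ j₁ = weight q0 i₀ j₀ ∧ IsTopMonomial q0 (reduceStep q0 P) i₁ j₁ := by
  obtain ⟨e, he⟩ : ∃ e, P.natDegree = e + (q0 + 1) := ⟨_, (Nat.sub_add_cancel hd).symm⟩
  set c := P.leadingCoeff
  have hc0 : c ≠ 0 := leadingCoeff_ne_zero.2 fun h0 => by simp [h0] at hd
  have hrow : ∀ j, c.coeff j ≠ 0 → weight q0 (e + (q0 + 1)) j ≤ weight q0 i₀ j₀ := fun j hj =>
    h.weight_le (by rwa [← he])
  rw [reduceStep, he, Nat.add_sub_cancel]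
  by_cases hi₀ : i₀ = e + (q0 + 1)
  · subst hi₀
    have hcdeg : c.natDegree = j₀ := le_antisymm
      (by simpa [c, leadingCoeff, he] using h.natDegree_coeff_le)
      (le_natDegree_of_ne_zero (by simpa [c, leadingCoeff, he] using h.1))
    have : Nontrivial R := nontrivial_iff.1 (nontrivial_of_ne c 0 hc0)
    have htop := isTopMonomial_C_mul_X_pow (q0 := q0) (r := c * X ^ q0)
      (fun h0 => hc0 (mul_X_pow_eq_zero h0)) e
    rw [natDegree_mul_X_pow q0 hc0, hcdeg] at htop
    refine ⟨e, j₀ + q0, (weight_add_succ_left ..).symm, ?_⟩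
    rw [add_comm P.eraseLead]
    refine (htop.add_of_weight_lt fun i j hij => ?_).add_of_weight_lt
      (weight_C_mul_X_mul_X_pow_lt hq fun j hj => weight_add_succ_left .. ▸ hrow j hj)
    rw [eraseLead_coeff] at hij
    split_ifs at hij with hi
    · simp at hij
    · exact weight_add_succ_left .. ▸ h.2 i j hij (by simp_all [Prod.ext_iff])
  · refine ⟨i₀, j₀, rfl, ((h.eraseLead (he ▸ hi₀)).add_of_weight_lt
      (weight_C_mul_X_pow_mul_X_pow_lt fun j hj => h.2 _ j (by rwa [← he]) ?_)).add_of_weight_lt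
      (weight_C_mul_X_mul_X_pow_lt hq hrow)⟩
    simp [Prod.ext_iff, Ne.symm hi₀]

lemma IsTopMonomial.exists_reduce (hq : 2 ≤ q0) {i₀ j₀ : ℕ}
    (h : IsTopMonomial q0 P i₀ j₀) :
    ∃ P' : R[X][Y], P'.natDegree ≤ q0 ∧
      (∀ a b : R, a ^ q0 + a = b ^ (q0 + 1) → P'.evalEval a b = P.evalEval a b) ∧
      ∃ i₁ j₁, weight q0 i₁ j₁ = weight q0 i₀ j₀ ∧ IsTopMonomial q0 P' i₁ j₁ := by
  induction hn : P.natDegree using Nat.strong_induction_on generalizing P i₀ j₀ with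
  | _ n ih =>
  by_cases hd : P.natDegree ≤ q0
  · exact ⟨P, hd, fun _ _ _ => rfl, i₀, j₀, rfl, h⟩
  obtain ⟨i₁, j₁, hw, h'⟩ := h.exists_reduceStep hq (by omega)
  obtain ⟨P', hdeg, heval, i₂, j₂, hw', h''⟩ :=
    ih _ (hn ▸ natDegree_reduceStep_lt (by omega)) h' rfl
  exact ⟨P', hdeg, fun a b hab => (heval a b hab).trans (evalEval_reduceStep (by omega) hab),
    i₂, j₂, hw'.trans hw, h''⟩

end Reduction

lemma add_pow_of_isPrimePow {R : Type*} [CommRing R] [IsDomain R] {q : ℕ} (hq : IsPrimePow q)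
    (hqR : (q : R) = 0) (x y : R) : (x + y) ^ q = x ^ q + y ^ q := by
  obtain ⟨p, k, hp, hk, rfl⟩ := hq
  have hp := Nat.prime_iff.2 hp
  have : Fact p.Prime := ⟨hp⟩
  have : CharP R p :=
    (CharP.charP_iff_prime_eq_zero hp).2 (pow_eq_zero_iff hk.ne' |>.1 (by exact_mod_cast hqR))
  exact add_pow_char_pow x y p k

lemma card_le_card_filter_ne_zero {K ι α : Type*} [Field K] [DecidableEq K] [Fintype ι]
    (T : Finset α) (w : α → K) (φ : ι → α → K)
    (h : ∀ g : ι → K, g ≠ 0 → ∃ p ∈ T, w p * ∑ m, g m * φ m p ≠ 0) :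
    Fintype.card ι ≤ #{p ∈ T | w p ≠ 0} := by
  let L : (ι → K) →ₗ[K] ({p // p ∈ T.filter (w · ≠ 0)} → K) :=
    Fintype.linearCombination K fun m p => φ m p
  have hL : Function.Injective L := by
    rw [← LinearMap.ker_eq_bot, LinearMap.ker_eq_bot']
    intro g hg
    by_contra hg0
    obtain ⟨p, hp, hne⟩ := h g hg0
    have := congrFun hg ⟨p, mem_filter.2 ⟨hp, left_ne_zero_of_mul hne⟩⟩
    simp [L, Fintype.linearCombination_apply] at this
    simp [this] at hne
  simpa using LinearMap.finrank_le_finrank_of_injective hL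

/-- The set `S` of the statement, `M` being the kernel of the trace `a ↦ a ^ q0 + a`. -/
def offTracePoints (F : Type*) [Field F] [Fintype F] [DecidableEq F] (q0 : ℕ) :
    Finset (F × F) :=
  {p | p.1 ^ q0 + p.1 = p.2 ^ (q0 + 1) ∧ p.1 ^ q0 + p.1 ≠ 0}

section FiniteField

variable {F : Type*} [Field F] [Fintype F]

lemma card_filter_eval_eq_zero_of_dvd [DecidableEq F] {f : F[X]} (hf : f ≠ 0)
    (hdvd : f ∣ X ^ Fintype.card F - X) :
    #{b | f.eval b = 0} = f.natDegree := by
  have h1q : 1 < Fintype.card F := Fintype.one_lt_card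
  have hXq := FiniteField.X_pow_card_sub_X_ne_zero F h1q
  have hroots := FiniteField.roots_X_pow_card_sub_X F
  have hsplits : Splits (X ^ Fintype.card F - X : F[X]) := by
    rw [splits_iff_card_roots, hroots, FiniteField.X_pow_card_sub_X_natDegree_eq F h1q]
    simp
  have hnodup : f.roots.Nodup :=
    Multiset.nodup_of_le (roots.le_of_dvd hXq hdvd) (hroots ▸ Finset.univ.nodup)
  have hset : ({b | f.eval b = 0} : Finset F) = f.roots.toFinset := by
    ext b; simp [mem_roots hf]
  rw [hset, Multiset.toFinset_card_of_nodup hnodup,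
    splits_iff_card_roots.1 (hsplits.of_dvd hXq hdvd)]

variable {q0 : ℕ} (hq0 : IsPrimePow q0) (hF : Fintype.card F = q0 ^ 2)
include hq0 hF

lemma add_pow_of_card_eq_sq {R : Type*} [CommRing R] [IsDomain R] [Algebra F R] (x y : R) :
    (x + y) ^ q0 = x ^ q0 + y ^ q0 := by
  refine add_pow_of_isPrimePow hq0 ?_ x y
  have h : (q0 : F) ^ 2 = 0 := by exact_mod_cast hF ▸ FiniteField.cast_card_eq_zero F
  simpa using congrArg (algebraMap F R) (pow_eq_zero_iff two_ne_zero |>.1 h)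

lemma card_filter_trace_eq_zero [DecidableEq F] : #{a : F | a ^ q0 + a = 0} = q0 := by
  have hq02 := hq0.two_le
  have hdeg : (X ^ q0 + X : F[X]).natDegree = q0 := by
    rw [natDegree_add_eq_left_of_natDegree_lt] <;> simp; omega
  have hdvd : (X ^ q0 + X : F[X]) ∣ X ^ Fintype.card F - X := by
    have : (X ^ Fintype.card F - X : F[X]) = (X ^ q0 + X) ^ q0 - (X ^ q0 + X) := by
      rw [add_pow_of_card_eq_sq hq0 hF, ← pow_mul, hF, sq]; ring
    exact this ▸ dvd_sub (dvd_pow_self _ (by omega)) dvd_rfl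
  have := card_filter_eval_eq_zero_of_dvd (by rintro h; simp [h] at hdeg; omega) hdvd
  simpa [hdeg] using this

lemma card_filter_trace_ne_zero [DecidableEq F] :
    #{a : F | a ^ q0 + a ≠ 0} = q0 ^ 2 - q0 := by
  have := card_filter_add_card_filter_not (s := univ) fun a : F => a ^ q0 + a = 0
  rw [card_filter_trace_eq_zero hq0 hF, card_univ, hF] at this
  simp only [ne_eq]
  omega

lemma card_filter_pow_succ_eq [DecidableEq F] {c : F} (hc0 : c ≠ 0) (hc : c ^ q0 = c) :
    #{b : F | b ^ (q0 + 1) = c} = q0 + 1 := by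
  have hq02 := hq0.two_le
  have hc1 : c ^ (q0 - 1) = 1 :=
    mul_left_cancel₀ hc0 (by rw [← pow_succ', Nat.sub_add_cancel (by omega), hc, mul_one])
  have hdeg : (X ^ (q0 + 1) - C c).natDegree = q0 + 1 := natDegree_X_pow_sub_C
  have hdvd : (X ^ (q0 + 1) - C c) ∣ X ^ Fintype.card F - X := by
    have h := sub_dvd_pow_sub_pow (X ^ (q0 + 1) : F[X]) (C c) (q0 - 1)
    rw [← C_pow, hc1, C_1, ← pow_mul] at h
    have : Fintype.card F = (q0 + 1) * (q0 - 1) + 1 := by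
      rw [hF]; cases q0 with | zero => omega | succ n => simp; ring
    rw [this, pow_succ X ((q0 + 1) * (q0 - 1)), ← sub_one_mul]
    exact h.mul_right X
  have := card_filter_eval_eq_zero_of_dvd (X_pow_sub_C_ne_zero (by omega) c) hdvd
  simpa [hdeg, sub_eq_zero] using this

lemma card_fiber [DecidableEq F] {a : F} (ha : a ^ q0 + a ≠ 0) :
    #{b : F | a ^ q0 + a = b ^ (q0 + 1)} = q0 + 1 := by
  simp_rw [eq_comm (a := a ^ q0 + a)]
  refine card_filter_pow_succ_eq hq0 hF ha ?_
  rw [add_pow_of_card_eq_sq hq0 hF, ← pow_mul, ← sq, ← hF, FiniteField.pow_card, add_comm]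

lemma coeff_eq_zero_of_evalEval_eq_zero [DecidableEq F] {P : F[X][Y]} (hdeg : P.natDegree ≤ q0)
    (hvan : ∀ a b : F, a ^ q0 + a = b ^ (q0 + 1) → a ^ q0 + a ≠ 0 → P.evalEval a b = 0)
    {i : ℕ} (hi : (P.coeff i).natDegree < q0 ^ 2 - q0) : P.coeff i = 0 := by
  have hrow : ∀ a : F, a ^ q0 + a ≠ 0 → (P.coeff i).eval a = 0 := by
    intro a ha
    have : P.map (evalRingHom a) = 0 := by
      refine eq_zero_of_natDegree_lt_card_of_eval_eq_zero' _ {b | a ^ q0 + a = b ^ (q0 + 1)}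
        (fun b hb => ?_) ?_
      · rw [eval_map, eval₂_evalRingHom]
        exact hvan a b (mem_filter.1 hb).2 ha
      · rw [card_fiber hq0 hF ha]
        exact natDegree_map_le.trans_lt (by omega)
    simpa using congrArg (coeff · i) this
  refine eq_zero_of_natDegree_lt_card_of_eval_eq_zero' _ {a | a ^ q0 + a ≠ 0}
    (fun a ha => hrow a (mem_filter.1 ha).2) ?_
  rwa [card_filter_trace_ne_zero hq0 hF]

lemma IsTopMonomial.exists_evalEval_ne_zero [DecidableEq F] {P : F[X][Y]} {i₀ j₀ i j : ℕ}
    (h : IsTopMonomial q0 P i₀ j₀) (hw : weight q0 i₀ j₀ = weight q0 i j) (hi : i ≤ q0)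
    (hj : j < q0 ^ 2 - q0) :
    ∃ a b : F, a ^ q0 + a = b ^ (q0 + 1) ∧ a ^ q0 + a ≠ 0 ∧ P.evalEval a b ≠ 0 := by
  obtain ⟨R, hRdeg, hReval, i₁, j₁, hw₁, hR⟩ := h.exists_reduce hq0.two_le
  obtain ⟨rfl, rfl⟩ := eq_and_eq_of_weight_eq (hR.le_natDegree.trans hRdeg) hi (hw₁.trans hw)
  by_contra! hvan
  refine hR.1 ?_
  rw [coeff_eq_zero_of_evalEval_eq_zero hq0 hF hRdeg
    (fun a b hab ha => (hReval a b hab).trans (hvan a b hab ha))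
    (hR.natDegree_coeff_le.trans_lt hj), coeff_zero]

lemma card_offTracePoints [DecidableEq F] : #(offTracePoints F q0) = q0 ^ 3 - q0 := by
  have hfiber : ∀ a : F, #{b : F | a ^ q0 + a = b ^ (q0 + 1) ∧ a ^ q0 + a ≠ 0} =
      if a ^ q0 + a ≠ 0 then q0 + 1 else 0 := by
    intro a
    split_ifs with ha
    · simpa [ha] using card_fiber hq0 hF ha
    · simp_all
  rw [offTracePoints, card_filter, Fintype.sum_prod_type]
  simp_rw [← card_filter, hfiber]
  rw [← sum_filter, sum_const, smul_eq_mul, card_filter_trace_ne_zero hq0 hF, cube_sub_self_eq,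
    mul_comm]

theorem IsTopMonomial.card_sub_weight_le [DecidableEq F] {P : F[X][Y]} {i₀ j₀ : ℕ}
    (h : IsTopMonomial q0 P i₀ j₀) (hi₀ : i₀ ≤ q0) :
    q0 ^ 3 - q0 - weight q0 i₀ j₀ ≤ #{p ∈ offTracePoints F q0 | P.evalEval p.1 p.2 ≠ 0} := by
  set s := shifts q0 (q0 ^ 2 - q0) i₀ j₀
  refine (cube_sub_self_eq q0 ▸ card_shifts hi₀).trans ?_
  rw [← Fintype.card_coe]
  -- for `G ≠ 0` supported on `s`, the top weight of `P * G` is that of a reduced monomial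
  refine card_le_card_filter_ne_zero _ (fun p : F × F => P.evalEval p.1 p.2)
    (fun (m : s) (p : F × F) => p.1 ^ m.1.2 * p.2 ^ m.1.1) fun g hg => ?_
  set G : F[X][Y] := ∑ m : s, monomial m.1.1 (monomial m.1.2 (g m))
  have hmem : ∀ i j, (G.coeff i).coeff j ≠ 0 → (i, j) ∈ s := fun i j hij => by
    rw [coeff_coeff_sum_monomial] at hij
    split_ifs at hij with hs
    exacts [hs, absurd rfl hij]
  have hG0 : G ≠ 0 := by
    obtain ⟨m, hm⟩ := Function.ne_iff.1 hg
    have hcoeff : (G.coeff m.1.1).coeff m.1.2 = g m := by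
      rw [coeff_coeff_sum_monomial, dif_pos m.2]
    intro h0
    exact hm (by rw [← hcoeff, h0]; simp)
  have hGdeg : G.natDegree ≤ q0 :=
    natDegree_le_of_coeff_coeff_ne_zero fun i j hij => le_of_mem_shifts (hmem i j hij)
  obtain ⟨i₁, j₁, hG⟩ := exists_isTopMonomial hG0 hGdeg
  obtain ⟨i, j, hi, hj, hw⟩ := exists_weight_eq_of_mem_shifts hi₀ (hmem _ _ hG.1)
  obtain ⟨a, b, hab, ha, hne⟩ := (h.mul hG).exists_evalEval_ne_zero hq0 hF hw.symm hi hj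
  refine ⟨(a, b), mem_filter.2 ⟨mem_univ _, hab, ha⟩, ?_⟩
  have hev : ∀ i j (r : F), (monomial i (monomial j r)).evalEval a b = r * a ^ j * b ^ i := by
    intro i j r
    rw [evalEval, eval_monomial, eval_mul, eval_monomial, eval_pow, eval_C]
  rw [evalEval_mul, evalEval_finsetSum] at hne
  simpa [hev, mul_assoc] using hne

end FiniteField

section Transfer

lemma evalEval_equivMvPolynomial_symm {R : Type*} [CommRing R] (a b : R)
    (D : MvPolynomial (Fin 2) R) :
    ((equivMvPolynomial R).symm D).evalEval a b = MvPolynomial.aeval ![a, b] D := by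
  have : (aevalAeval a b).comp ((equivMvPolynomial R).symm : MvPolynomial (Fin 2) R →ₐ[R] R[X][Y]) =
      MvPolynomial.aeval ![a, b] := by
    ext i; fin_cases i <;> simp
  rw [← coe_aevalAeval_eq_evalEval, ← this]; rfl

lemma equivMvPolynomial_symm_monomial {R : Type*} [CommRing R] (m : Fin 2 →₀ ℕ) (r : R) :
    (equivMvPolynomial R).symm (MvPolynomial.monomial m r) = monomial (m 1) (monomial (m 0) r) := by
  rw [MvPolynomial.monomial_eq, Finsupp.prod_fintype _ _ (by simp), Fin.prod_univ_two]
  simp [← C_mul_X_pow_eq_monomial, mul_comm, mul_left_comm]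

lemma coeff_coeff_equivMvPolynomial_symm {R : Type*} [CommRing R] (D : MvPolynomial (Fin 2) R)
    (i j : ℕ) :
    (((equivMvPolynomial R).symm D).coeff i).coeff j =
      D.coeff (Finsupp.single 0 j + Finsupp.single 1 i) := by
  induction D using MvPolynomial.induction_on' with
  | monomial m r =>
    have : m = Finsupp.single 0 j + Finsupp.single 1 i ↔ m 1 = i ∧ m 0 = j := by
      rw [Finsupp.ext_iff, Fin.forall_fin_two]; simp [and_comm]
    rw [equivMvPolynomial_symm_monomial, coeff_monomial, MvPolynomial.coeff_monomial]
    simp only [this]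
    by_cases h1 : m 1 = i <;> by_cases h0 : m 0 = j <;> simp [h0, h1, coeff_monomial]
  | add p q hp hq => simp [hp, hq]

/-- Exponents of the monomials `x ^ j * y ^ i`, `j ≤ t`, `i < q0`, with `x = X 0` and `y = X 1`. -/
def exponentBox (t q0 : ℕ) : Finset (Fin 2 →₀ ℕ) :=
  (range (t + 1) ×ˢ range q0).image fun p => Finsupp.single 0 p.1 + Finsupp.single 1 p.2

lemma single_add_single_injective :
    Function.Injective fun p : ℕ × ℕ =>
      (Finsupp.single 0 p.1 + Finsupp.single 1 p.2 : Fin 2 →₀ ℕ) := by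
  intro p p' h
  have h0 := congrArg (· 0) h
  have h1 := congrArg (· 1) h
  simp only [Finsupp.add_apply, Finsupp.single_apply] at h0 h1
  norm_num at h0 h1
  exact Prod.ext h0 h1

variable {F : Type*} [Field F] {t q0 : ℕ}

lemma span_X_pow_mul_X_pow_eq_restrictSupport (hq : 0 < q0) :
    Submodule.span F {p : MvPolynomial (Fin 2) F | ∃ j i : ℕ, j ≤ t ∧ i ≤ q0 - 1 ∧
      p = MvPolynomial.X 0 ^ j * MvPolynomial.X 1 ^ i} =
    MvPolynomial.restrictSupport F (exponentBox t q0 : Set (Fin 2 →₀ ℕ)) := by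
  rw [MvPolynomial.restrictSupport_eq_span]
  congr 1
  ext p
  simp only [exponentBox, coe_image, coe_product, coe_range, Set.mem_image, Set.mem_prod,
    Set.mem_Iio, Prod.exists, MvPolynomial.X_pow_eq_monomial, MvPolynomial.monomial_mul, one_mul]
  constructor
  · rintro ⟨j, i, hj, hi, rfl⟩
    exact ⟨_, ⟨j, i, ⟨by omega, by omega⟩, rfl⟩, rfl⟩
  · rintro ⟨_, ⟨j, i, ⟨hj, hi⟩, rfl⟩, rfl⟩
    exact ⟨j, i, by omega, by omega, rfl⟩

lemma finrank_restrictSupport_exponentBox :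
    Module.finrank F (MvPolynomial.restrictSupport F (exponentBox t q0 : Set (Fin 2 →₀ ℕ))) =
      (t + 1) * q0 := by
  rw [Module.finrank_eq_nat_card_basis (MvPolynomial.basisRestrictSupport F _), Nat.card_coe_set_eq,
    Set.ncard_coe_finset, exponentBox, card_image_of_injective _ single_add_single_injective,
    card_product, card_range, card_range]

lemma lt_and_le_of_mem_restrictSupport {D : MvPolynomial (Fin 2) F}
    (hD : D ∈ MvPolynomial.restrictSupport F (exponentBox t q0 : Set (Fin 2 →₀ ℕ))) {i j : ℕ}
    (hij : (((equivMvPolynomial F).symm D).coeff i).coeff j ≠ 0) : i < q0 ∧ j ≤ t := by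
  rw [coeff_coeff_equivMvPolynomial_symm] at hij
  obtain ⟨⟨j', i'⟩, hm, he⟩ := mem_image.1 (hD (MvPolynomial.mem_support_iff.2 hij))
  obtain ⟨rfl, rfl⟩ :=
    Prod.ext_iff.1 (single_add_single_injective (a₁ := (j', i')) (a₂ := (j, i)) he)
  simp only [mem_product, mem_range] at hm
  omega

end Transfer

section EvaluationCode

lemma evalMv_apply {R : Type*} [CommRing R] (S : Finset (R × R)) (D : MvPolynomial (Fin 2) R)
    (p : S) : evalMv S D p = ((equivMvPolynomial R).symm D).evalEval p.1.1 p.1.2 :=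
  (evalEval_equivMvPolynomial_symm _ _ D).symm

variable {F : Type*} [Field F] [DecidableEq F] {q0 t : ℕ}

lemma hammingDist_evalMv (S : Finset (F × F)) (f f' : MvPolynomial (Fin 2) F) :
    hammingDist (evalMv S f) (evalMv S f') =
      #{p ∈ S | ((equivMvPolynomial F).symm (f - f')).evalEval p.1 p.2 ≠ 0} := by
  rw [hammingDist, ← card_map (Function.Embedding.subtype _)]
  congr 1
  ext p
  simp [evalMv_apply, sub_eq_zero, and_comm]

variable [Fintype F] (hq0 : IsPrimePow q0) (hF : Fintype.card F = q0 ^ 2)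
include hq0 hF

lemma injOn_evalMv (ht : t < q0 ^ 2 - q0) :
    Set.InjOn (evalMv (offTracePoints F q0))
      (MvPolynomial.restrictSupport F (exponentBox t q0 : Set (Fin 2 →₀ ℕ))) := by
  intro f hf f' hf' h
  rw [← sub_eq_zero, ← (equivMvPolynomial F).symm.map_eq_zero_iff]
  have hbox := fun {i j} => lt_and_le_of_mem_restrictSupport (sub_mem hf hf') (i := i) (j := j)
  ext i : 1
  rw [coeff_zero]
  refine coeff_eq_zero_of_evalEval_eq_zero hq0 hF
    (natDegree_le_of_coeff_coeff_ne_zero fun i j h => (hbox h).1.le) (fun a b hab ha => ?_)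
    (lt_of_le_of_lt (natDegree_le_iff_coeff_eq_zero.2 fun j hj => ?_) ht)
  · have := congrFun h ⟨(a, b), mem_filter.2 ⟨mem_univ _, hab, ha⟩⟩
    rwa [evalMv_apply, evalMv_apply, ← sub_eq_zero, ← evalEval_sub, ← map_sub] at this
  · by_contra hij
    exact hj.not_ge (hbox hij).2

lemma le_hammingDist_evalMv {f f' : MvPolynomial (Fin 2) F}
    (hf : f ∈ MvPolynomial.restrictSupport F (exponentBox t q0 : Set (Fin 2 →₀ ℕ)))
    (hf' : f' ∈ MvPolynomial.restrictSupport F (exponentBox t q0 : Set (Fin 2 →₀ ℕ)))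
    (hne : evalMv (offTracePoints F q0) f ≠ evalMv (offTracePoints F q0) f') :
    q0 ^ 3 - q0 - t * (q0 + 1) - q0 * (q0 - 1) ≤
      hammingDist (evalMv (offTracePoints F q0) f) (evalMv (offTracePoints F q0) f') := by
  have hbox := fun {i j} => lt_and_le_of_mem_restrictSupport (sub_mem hf hf') (i := i) (j := j)
  have hP : (equivMvPolynomial F).symm (f - f') ≠ 0 := by
    refine fun h0 => hne (funext fun p => ?_)
    have := evalMv_apply (offTracePoints F q0) (f - f') p
    rwa [h0, evalEval_zero, map_sub, Pi.sub_apply, sub_eq_zero] at this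
  obtain ⟨i₀, j₀, htop⟩ :=
    exists_isTopMonomial hP (natDegree_le_of_coeff_coeff_ne_zero fun i j h => (hbox h).1.le)
  obtain ⟨hi₀, hj₀⟩ := hbox htop.1
  have hw : weight q0 i₀ j₀ ≤ t * (q0 + 1) + q0 * (q0 - 1) :=
    add_le_add (Nat.mul_le_mul_right _ hj₀)
      ((Nat.mul_le_mul_right q0 (Nat.le_sub_one_of_lt hi₀)).trans_eq (mul_comm _ _))
  rw [hammingDist_evalMv, Nat.sub_sub]
  exact (Nat.sub_le_sub_left hw _).trans (htop.card_sub_weight_le hq0 hF hi₀.le)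

end EvaluationCode

end Hermitian

open Hermitian in
theorem hermitian_lrc_x_projection_general
    (q0 t : ℕ) (hq0 : IsPrimePow q0)
    (hlt : t * (q0 + 1) + q0 * (q0 - 1) < q0 ^ 3 - q0)
    (F : Type*) [Field F] [Fintype F] [DecidableEq F] (hF : Fintype.card F = q0 ^ 2)
    (M : Finset F) (hM : M = Finset.univ.filter fun a : F => a ^ q0 + a = 0)
    (S : Finset (F × F))
    (hS : S = Finset.univ.filter fun p : F × F =>
      p.1 ^ q0 + p.1 = p.2 ^ (q0 + 1) ∧ p.1 ∉ M)
    (W : Submodule F (MvPolynomial (Fin 2) F))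
    (hW : W = Submodule.span F
      {p : MvPolynomial (Fin 2) F | ∃ j i : ℕ, j ≤ t ∧ i ≤ q0 - 1 ∧
        p = MvPolynomial.X 0 ^ j * MvPolynomial.X 1 ^ i})
    (C : Submodule F (S → F)) (hC : C = Submodule.map (evalMv S) W) :
    S.card = q0 ^ 3 - q0 ∧
    Set.InjOn (⇑(evalMv S)) (W : Set (MvPolynomial (Fin 2) F)) ∧
    Module.finrank F C = (t + 1) * q0 ∧
    (∀ c ∈ C, ∀ c' ∈ C, c ≠ c' →
      (q0 ^ 3 - q0) - t * (q0 + 1) - q0 * (q0 - 1) ≤ hammingDist c c') := by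
  obtain rfl : S = offTracePoints F q0 := by
    subst hS hM
    ext
    simp [offTracePoints]
  rw [span_X_pow_mul_X_pow_eq_restrictSupport hq0.pos] at hW
  subst hW hC
  have ht : t < q0 ^ 2 - q0 := by
    rw [cube_sub_self_eq] at hlt
    exact Nat.lt_of_mul_lt_mul_left ((Nat.le_add_right _ _).trans_lt (mul_comm t _ ▸ hlt))
  have hinj := injOn_evalMv hq0 hF ht
  refine ⟨card_offTracePoints hq0 hF, hinj, ?_, ?_⟩
  · have hinj' : Function.Injective ((evalMv (offTracePoints F q0)).comp (Submodule.subtype _)) :=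
      fun x y h => Subtype.ext (hinj x.2 y.2 h)
    rw [← finrank_restrictSupport_exponentBox (F := F), ← LinearMap.finrank_range_of_inj hinj',
      LinearMap.range_comp, Submodule.range_subtype]
  · rintro _ ⟨f, hf, rfl⟩ _ ⟨f', hf', rfl⟩ hne
    exact le_hammingDist_evalMv hq0 hF hf hf' hne

/-- Hermitian LRC codes from the projection on `x`: evaluating
`W = span{x^j y^i : j ≤ t, i ≤ q0-1}` at the points `S` of the Hermitian curve lying over
`𝔽_q \ M` gives an injective map, hence a linear code of length `q0³ - q0`, dimension
`(t+1)q0`, and minimum distance at least `(q0³ - q0) - t(q0+1) - q0(q0-1)`. -/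
theorem hermitian_lrc_x_projection
    (q0 t : ℕ) (hq0 : IsPrimePow q0) (ht : 1 ≤ t)
    (hlt : t * (q0 + 1) + q0 * (q0 - 1) < q0 ^ 3 - q0)
    (F : Type*) [Field F] [Fintype F] [DecidableEq F] (hF : Fintype.card F = q0 ^ 2)
    (M : Finset F) (hM : M = Finset.univ.filter fun a : F => a ^ q0 + a = 0)
    (S : Finset (F × F))
    (hS : S = Finset.univ.filter fun p : F × F =>
      p.1 ^ q0 + p.1 = p.2 ^ (q0 + 1) ∧ p.1 ∉ M)
    (W : Submodule F (MvPolynomial (Fin 2) F))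
    (hW : W = Submodule.span F
      {p : MvPolynomial (Fin 2) F | ∃ j i : ℕ, j ≤ t ∧ i ≤ q0 - 1 ∧
        p = MvPolynomial.X 0 ^ j * MvPolynomial.X 1 ^ i})
    (C : Submodule F (S → F)) (hC : C = Submodule.map (evalMv S) W) :
    S.card = q0 ^ 3 - q0 ∧
    Set.InjOn (⇑(evalMv S)) (W : Set (MvPolynomial (Fin 2) F)) ∧
    Module.finrank F C = (t + 1) * q0 ∧
    (∀ c ∈ C, ∀ c' ∈ C, c ≠ c' →
      (q0 ^ 3 - q0) - t * (q0 + 1) - q0 * (q0 - 1) ≤ hammingDist c c') :=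
  hermitian_lrc_x_projection_general q0 t hq0 hlt F hF M hM S hS W hW C hC
end
end

section
/- Let q0 be a prime power, q = q0², and let t ≥ 1 be an integer. Let M = {a ∈ 𝔽_q : a^{q0} + a = 0}, let S = {(a,b) ∈ 𝔽_q × 𝔽_q : a^{q0} + a = b^{q0+1}, a ∉ M}, and let W ⊆ 𝔽_q[x,y] be the 𝔽_q-linear span of the monomials x^j y^i for 0 ≤ j ≤ t and 0 ≤ i ≤ q0-1, with C ⊆ 𝔽_q^S the image of W under the evaluation map F ↦ (F(a,b))_{(a,b) ∈ S}. Then for every F ∈ W and every a ∈ 𝔽_q \ M there is a univariate polynomial f ∈ 𝔽_q[y] of degree at most q0-1 such that F(a,b) = f(b) for all b with b^{q0+1} = a^{q0} + a; consequently C has all-symbol locality q0, where the recovering set of the coordinate (a,b) ∈ S is {(a,b') ∈ S : b' ≠ b}. -/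
noncomputable section

/-!
Over `a ∉ M` the Hermitian curve meets the vertical line `x = a` in the `q0 + 1` points `(a, b)`
with `b ^ (q0 + 1) = a ^ q0 + a ≠ 0`: the `(q0 + 1)`-th roots of a nonzero element, all present
because `q0 + 1` divides `q0 ^ 2 - 1 = |𝔽_qˣ|`. Restricted to that line, a codeword polynomial
becomes a polynomial in `y` of degree at most `q0 - 1`, so its values at the `q0` other points of
the line determine it, and hence its value at `(a, b)`.
-/

open Finset Polynomial

section VerticalRestriction

variable {R : Type*} [CommSemiring R]

def verticalRestriction (a : R) : MvPolynomial (Fin 2) R →ₐ[R] R[X] :=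
  MvPolynomial.aeval ![C a, X]

theorem eval_verticalRestriction (a b : R) (G : MvPolynomial (Fin 2) R) :
    (verticalRestriction a G).eval b = MvPolynomial.eval ![a, b] G := by
  induction G using MvPolynomial.induction_on with
  | C r => simp [verticalRestriction]
  | add p q hp hq => simp [hp, hq]
  | mul_X p i hp =>
    rw [map_mul, eval_mul, hp, map_mul]
    fin_cases i <;> simp [verticalRestriction]

theorem degree_verticalRestriction_le {d : ℕ} {G : MvPolynomial (Fin 2) R}
    (hG : G ∈ Submodule.span R
      {p | ∃ j i : ℕ, i ≤ d ∧ p = MvPolynomial.X 0 ^ j * MvPolynomial.X 1 ^ i})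
    (a : R) : (verticalRestriction a G).degree ≤ d := by
  rw [← mem_degreeLE]
  refine (Submodule.span_le (p := (degreeLE R d).comap (verticalRestriction a).toLinearMap)).2
    ?_ hG
  rintro _ ⟨j, i, hi, rfl⟩
  have hmonomial : verticalRestriction a (MvPolynomial.X 0 ^ j * MvPolynomial.X 1 ^ i) =
      C (a ^ j) * X ^ i := by
    simp [verticalRestriction, C_pow]
  rw [SetLike.mem_coe, Submodule.mem_comap, AlgHom.toLinearMap_apply, hmonomial, mem_degreeLE]
  exact (degree_C_mul_X_pow_le i (a ^ j)).trans (WithBot.coe_le_coe.2 hi)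

end VerticalRestriction

theorem evalMv_apply {F : Type*} [CommSemiring F] (S : Finset (F × F))
    (G : MvPolynomial (Fin 2) F) (P : S) :
    evalMv S G P = MvPolynomial.eval ![(P : F × F).1, (P : F × F).2] G := by
  simp [evalMv]

section FiniteField

variable {F : Type*} [Field F] [Fintype F]

theorem exists_isPrimitiveRoot_of_dvd_card_sub_one {n : ℕ} (hn : n ∣ Fintype.card F - 1) :
    ∃ ζ : F, IsPrimitiveRoot ζ n := by
  obtain ⟨g, hg⟩ := IsCyclic.exists_ofOrder_eq_natCard (α := Fˣ)
  rw [Nat.card_units, Nat.card_eq_fintype_card] at hg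
  exact ⟨(g ^ (orderOf g / n) : Fˣ), IsPrimitiveRoot.coe_units_iff.2 <| IsPrimitiveRoot.iff_orderOf.2 <|
    orderOf_pow_orderOf_div (orderOf_pos g).ne' (hg ▸ hn)⟩

theorem card_filter_pow_eq_pow [DecidableEq F] {n : ℕ} (hn : n ∣ Fintype.card F - 1) {b : F}
    (hb : b ≠ 0) : #{y | y ^ n = b ^ n} = n := by
  have hn0 : 0 < n := Nat.pos_of_dvd_of_pos hn (by have := Fintype.one_lt_card (α := F); omega)
  obtain ⟨ζ, hζ⟩ := exists_isPrimitiveRoot_of_dvd_card_sub_one hn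
  have hroots : ({y | y ^ n = b ^ n} : Finset F) = nthRootsFinset n (b ^ n) := by
    ext y
    simp [mem_nthRootsFinset hn0]
  rw [hroots, nthRootsFinset_def,
    Multiset.toFinset_card_of_nodup (hζ.nthRoots_nodup (pow_ne_zero n hb)), hζ.card_nthRoots,
    if_pos ⟨b, rfl⟩]

end FiniteField

section VerticalSlice

variable {F : Type*} [DecidableEq F]

def verticalSlice (S : Finset (F × F)) (a : F) : Finset F :=
  {p ∈ S | p.1 = a}.image Prod.snd

theorem mem_verticalSlice {S : Finset (F × F)} {a y : F} :
    y ∈ verticalSlice S a ↔ (a, y) ∈ S := by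
  simp [verticalSlice]

theorem card_filter_fst_eq_snd_ne (S : Finset (F × F)) (a b : F) :
    #{p ∈ S | p.1 = a ∧ p.2 ≠ b} = #((verticalSlice S a).erase b) := by
  refine card_nbij' Prod.snd (Prod.mk a) ?_ ?_ ?_ ?_
  · rintro ⟨x, y⟩ hp
    obtain ⟨hxy, rfl, hyb⟩ : (x, y) ∈ S ∧ x = a ∧ y ≠ b := by simpa using hp
    exact mem_erase.2 ⟨hyb, mem_verticalSlice.2 hxy⟩
  · intro y hy
    simpa [mem_verticalSlice, and_comm] using hy
  · rintro ⟨x, y⟩ hp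
    obtain rfl : x = a := (mem_filter.1 hp).2.1
    rfl
  · intro y _
    rfl

end VerticalSlice

theorem evalMv_eq_of_eq_on_verticalSlice {F : Type*} [Field F] [DecidableEq F]
    {S : Finset (F × F)} {W : Submodule F (MvPolynomial (Fin 2) F)} {d : ℕ}
    (hW : ∀ G ∈ W, ∀ a, (verticalRestriction a G).degree ≤ d) {P : S}
    (hP : d < #((verticalSlice S (P : F × F).1).erase (P : F × F).2)) {c c' : S → F}
    (hc : c ∈ W.map (evalMv S)) (hc' : c' ∈ W.map (evalMv S))
    (h : ∀ Q : S, (Q : F × F).1 = (P : F × F).1 → Q ≠ P → c Q = c' Q) : c P = c' P := by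
  obtain ⟨G, hG, rfl⟩ := hc
  obtain ⟨G', hG', rfl⟩ := hc'
  obtain ⟨⟨a, b⟩, hab⟩ := P
  have hvanish : verticalRestriction a (G - G') = 0 := by
    refine eq_zero_of_natDegree_lt_card_of_eval_eq_zero' _ ((verticalSlice S a).erase b)
      (fun y hy => ?_) ?_
    · obtain ⟨hyb, hy⟩ := mem_erase.1 hy
      have hQ := h ⟨(a, y), mem_verticalSlice.1 hy⟩ rfl (by simpa using hyb)
      rw [evalMv_apply, evalMv_apply] at hQ
      rw [eval_verticalRestriction, map_sub, sub_eq_zero]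
      exact hQ
    · exact (natDegree_le_iff_degree_le.2 (hW _ (W.sub_mem hG hG') a)).trans_lt hP
  have hb := congrArg (eval b) hvanish
  rw [eval_verticalRestriction, map_sub, eval_zero, sub_eq_zero] at hb
  rw [evalMv_apply, evalMv_apply]
  exact hb

theorem hermitian_lrc_x_projection_locality_general
    (q0 t : ℕ)
    (F : Type*) [Field F] [Fintype F] [DecidableEq F] (hF : Fintype.card F = q0 ^ 2)
    (M : Finset F) (hM : M = Finset.univ.filter fun a : F => a ^ q0 + a = 0)
    (S : Finset (F × F))
    (hS : S = Finset.univ.filter fun p : F × F =>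
      p.1 ^ q0 + p.1 = p.2 ^ (q0 + 1) ∧ p.1 ∉ M)
    (W : Submodule F (MvPolynomial (Fin 2) F))
    (hW : W = Submodule.span F
      {p : MvPolynomial (Fin 2) F | ∃ j i : ℕ, j ≤ t ∧ i ≤ q0 - 1 ∧
        p = MvPolynomial.X 0 ^ j * MvPolynomial.X 1 ^ i})
    (C : Submodule F (S → F)) (hC : C = Submodule.map (evalMv S) W) :
    (∀ G ∈ W, ∀ a : F, a ∉ M → ∃ f : Polynomial F, f.degree ≤ ((q0 - 1 : ℕ) : WithBot ℕ) ∧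
        ∀ b : F, b ^ (q0 + 1) = a ^ q0 + a → MvPolynomial.eval ![a, b] G = f.eval b) ∧
    (∀ P : S, (S.filter fun p : F × F => p.1 = (P : F × F).1 ∧ p.2 ≠ (P : F × F).2).card ≤ q0 ∧
        ∀ c ∈ C, ∀ c' ∈ C,
          (∀ Q : S, (Q : F × F).1 = (P : F × F).1 → Q ≠ P → c Q = c' Q) → c P = c' P) := by
  subst hC
  have hdeg : ∀ G ∈ W, ∀ a, (verticalRestriction a G).degree ≤ (q0 - 1 : ℕ) := by
    refine fun G hG => degree_verticalRestriction_le (Submodule.span_mono ?_ (hW ▸ hG))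
    rintro _ ⟨j, i, -, hi, rfl⟩
    exact ⟨j, i, hi, rfl⟩
  have hq0 : q0 ≠ 0 := by
    rintro rfl
    simp at hF
  have hdvd : q0 + 1 ∣ Fintype.card F - 1 := hF ▸ ⟨q0 - 1, by simpa using Nat.sq_sub_sq q0 1⟩
  have hslice : ∀ a b : F, (a, b) ∈ S → #((verticalSlice S a).erase b) = q0 := by
    intro a b hP
    obtain ⟨hab, ha⟩ : a ^ q0 + a = b ^ (q0 + 1) ∧ a ^ q0 + a ≠ 0 := by simpa [hS, hM] using hP
    have hfiber : verticalSlice S a = ({y | y ^ (q0 + 1) = b ^ (q0 + 1)} : Finset F) := by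
      ext y
      simp [mem_verticalSlice, hS, hM, ← hab, ha, eq_comm]
    have hb : b ≠ 0 := by
      rintro rfl
      exact ha (by simp [hab])
    rw [card_erase_of_mem (by simp [hfiber]), hfiber, card_filter_pow_eq_pow hdvd hb,
      add_tsub_cancel_right]
  refine ⟨fun G hG a _ => ⟨_, hdeg G hG a, fun b _ => (eval_verticalRestriction a b G).symm⟩,
    fun P => ⟨?_, fun c hc c' hc' => evalMv_eq_of_eq_on_verticalSlice hdeg ?_ hc hc'⟩⟩
  · rw [card_filter_fst_eq_snd_ne, hslice _ _ P.2]
  · rw [hslice _ _ P.2]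
    omega

/-- On each fiber of the projection `(x,y) ↦ x` over `𝔽_q \ M`, every `G` in the code
space `W = span{x^j y^i : j ≤ t, i ≤ q0-1}` agrees with a univariate polynomial in `y` of
degree at most `q0 - 1`; consequently the evaluation code `C` has all-symbol locality
`q0`, the recovering set of a coordinate `(a,b) ∈ S` being `{(a,b') ∈ S : b' ≠ b}`. -/
theorem hermitian_lrc_x_projection_locality
    (q0 t : ℕ) (hq0 : IsPrimePow q0) (ht : 1 ≤ t)
    (F : Type*) [Field F] [Fintype F] [DecidableEq F] (hF : Fintype.card F = q0 ^ 2)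
    (M : Finset F) (hM : M = Finset.univ.filter fun a : F => a ^ q0 + a = 0)
    (S : Finset (F × F))
    (hS : S = Finset.univ.filter fun p : F × F =>
      p.1 ^ q0 + p.1 = p.2 ^ (q0 + 1) ∧ p.1 ∉ M)
    (W : Submodule F (MvPolynomial (Fin 2) F))
    (hW : W = Submodule.span F
      {p : MvPolynomial (Fin 2) F | ∃ j i : ℕ, j ≤ t ∧ i ≤ q0 - 1 ∧
        p = MvPolynomial.X 0 ^ j * MvPolynomial.X 1 ^ i})
    (C : Submodule F (S → F)) (hC : C = Submodule.map (evalMv S) W) :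
    (∀ G ∈ W, ∀ a : F, a ∉ M → ∃ f : Polynomial F, f.degree ≤ ((q0 - 1 : ℕ) : WithBot ℕ) ∧
        ∀ b : F, b ^ (q0 + 1) = a ^ q0 + a → MvPolynomial.eval ![a, b] G = f.eval b) ∧
    (∀ P : S, (S.filter fun p : F × F => p.1 = (P : F × F).1 ∧ p.2 ≠ (P : F × F).2).card ≤ q0 ∧
        ∀ c ∈ C, ∀ c' ∈ C,
          (∀ Q : S, (Q : F × F).1 = (P : F × F).1 → Q ≠ P → c Q = c' Q) → c P = c' P) :=
  hermitian_lrc_x_projection_locality_general q0 t F hF M hM S hS W hW C hC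
end
end
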